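/- arXiv:1304.0094 — 5 statements merged into one kernel-verified Lean document; each statement's English description precedes it below -/
import Mathlib

section
/- Let χ: ℙ₁ × ℙ₂ → ℙ' be a linear map, let rad₁χ and D₁ be complementary subspaces of ℙ₁, let rad₂χ and D₂ be complementary subspaces of ℙ₂, let π_i: ℙ_i → D_i be the projection onto D_i from rad_iχ (i = 1, 2), and let χ' := χ restricted to D₁ × D₂. Then for every (X, Y) ∈ 𝒫₁ × 𝒫₂ it holds {(X, Y)}χ = (Xπ₁ × Yπ₂)χ' (an equality of subsets of the point set of ℙ', both sides possibly empty). -/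
open Set

namespace Segre

variable {P Q : Type*}

/-- Two points are collinear w.r.t. a line set `L` if some line contains both. -/
def Collin (L : Set (Set P)) (x y : P) : Prop := ∃ g ∈ L, x ∈ g ∧ y ∈ g

/-- The union of all lines of `L` through both `x` and `y`; for distinct collinear
points of a semilinear space this is the unique line `xy`. -/
def lineThru (L : Set (Set P)) (x y : P) : Set P := ⋃ g ∈ {g ∈ L | x ∈ g ∧ y ∈ g}, g

/-- The join `M₁ ∨ M₂` of two point sets in a (semi)linear space with line set `L`. -/
def sJoin (L : Set (Set P)) (M₁ M₂ : Set P) : Set P :=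
  M₁ ∪ M₂ ∪
    ⋃ (x ∈ M₁) (y ∈ M₂) (_ : x ≠ y ∧ Collin L x y), lineThru L x y

/-- The (possibly empty) image point set `Xχ` of a single point under a partial map. -/
def ptImg (χ : P → Option Q) (X : P) : Set Q := {y | χ X = some y}

/-- The image `Mχ` of a point set under a partial map. -/
def mapSet (χ : P → Option Q) (M : Set P) : Set Q := ⋃ X ∈ M, ptImg χ X

/-- Axioms (L1) and (L2) for a linear map from the semilinear space with point set `P`
and line set `L` into the projective space with point set `Q` and line set `L'`.
Points in the exceptional set are modelled by the value `none`. -/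
def IsLinMap (L : Set (Set P)) (L' : Set (Set Q)) (χ : P → Option Q) : Prop :=
  (∀ X Y : P, Collin L X Y →
      mapSet χ (sJoin L {X} {Y}) = sJoin L' (ptImg χ X) (ptImg χ Y)) ∧
  (∀ X Y : P, Collin L X Y → X ≠ Y → ptImg χ X = ptImg χ Y →
      ∃ Z ∈ lineThru L X Y, χ Z = none)

/-- A linear map is global if its domain is everything. -/
def IsGlobal (χ : P → Option Q) : Prop := ∀ X, χ X ≠ none

/-- The lines of the product of two semilinear spaces with line sets `L₁`, `L₂`. -/
def prodLines (L₁ : Set (Set P)) (L₂ : Set (Set Q)) : Set (Set (P × Q)) :=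
  {s | (∃ X₁ : P, ∃ g₂ ∈ L₂, s = {X₁} ×ˢ g₂) ∨ ∃ g₁ ∈ L₁, ∃ X₂ : Q, s = g₁ ×ˢ {X₂}}

/-- The lines of the product of two lines `ℓ₁`, `ℓ₂` (viewed as semilinear spaces). -/
def lineProdLines (ℓ₁ : Set P) (ℓ₂ : Set Q) : Set (Set (P × Q)) :=
  {s | (∃ X ∈ ℓ₁, s = {X} ×ˢ ℓ₂) ∨ ∃ Y ∈ ℓ₂, s = ℓ₁ ×ˢ {Y}}

/-- A collineation of a projective (or semilinear) space with line set `L`: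
a bijection such that it and its inverse map lines onto lines. -/
def IsCollineation (L : Set (Set P)) (α : P → P) : Prop :=
  Function.Bijective α ∧ ∀ g : Set P, g ∈ L ↔ α '' g ∈ L

section Projective

variable {K V : Type*} [Field K] [AddCommGroup V] [Module K V]

/-- The point set of the projective line through two (distinct) points of a
projective space `ℙ K V`. -/
def projLineThrough (x y : Projectivization K V) : Set (Projectivization K V) :=
  {z | z.submodule ≤ x.submodule ⊔ y.submodule}

/-- The lines of the projective space `ℙ K V`. -/
def projLines (K V : Type*) [Field K] [AddCommGroup V] [Module K V] :
    Set (Set (Projectivization K V)) :=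
  {g | ∃ x y : Projectivization K V, x ≠ y ∧ g = projLineThrough x y}

/-- The linear span of (representatives of) a set of projective points; its projective
space is the projective closure of the set, whose projective dimension is the vector
rank of this span minus one. -/
def spanOf (M : Set (Projectivization K V)) : Submodule K V := ⨆ x ∈ M, x.submodule

/-- `E` is the point set of a plane (projective dimension 2). -/
def IsPlane (E : Set (Projectivization K V)) : Prop :=
  ∃ W : Submodule K V, Module.finrank K ↥W = 3 ∧ E = {x | x.submodule ≤ W}

/-- The family of points `A` is a projective basis of the subspace of `ℙ K V`
corresponding to the submodule `W`: the representatives are linearly independent and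
span `W`. -/
def IsProjBasisOf {ι : Type*} (A : ι → Projectivization K V) (W : Submodule K V) : Prop :=
  iSupIndep (fun i => (A i).submodule) ∧ (⨆ i, (A i).submodule) = W

end Projective

section PG

variable (F : Type*) [Field F]

/-- The point set of `PG(k, F)`. -/
abbrev PGPt (k : ℕ) := Projectivization F (Fin (k + 1) → F)

/-- The line set of `PG(k, F)`. -/
abbrev PGLines (k : ℕ) := projLines F (Fin (k + 1) → F)

variable (n m : ℕ)

/-- A regular embedding `γ : ℙ₁ × ℙ₂ → ℙ̄`, where `ℙ₁ = PG(n,F)`, `ℙ₂ = PG(m,F)` and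
`ℙ̄ = PG(nm+n+m, F)`: a global injective linear map of the product such that the
projective closure of the image has (projective) dimension `nm+n+m`. -/
def IsRegularEmbedding (γ : PGPt F n × PGPt F m → PGPt F (n * m + n + m)) : Prop :=
  IsLinMap (prodLines (PGLines F n) (PGLines F m)) (PGLines F (n * m + n + m))
      (fun p => some (γ p)) ∧
  Function.Injective γ ∧
  Module.finrank F ↥(spanOf (Set.range γ)) = n * m + n + m + 1

variable {K W : Type*} [Field K] [AddCommGroup W] [Module K W]

/-- Condition (i) on `χ`, w.r.t. the basis `B` of `ℙ₂` and the plane `E ⊆ 𝒫₁`: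
for every `i = 1, …, m` the restriction of `χ` to `E × {B 0, B i}` is global and
of rank greater than `2` (i.e. the vector rank of the span of its image exceeds `3`). -/
def CondI (χ : PGPt F n × PGPt F m → Option (Projectivization K W))
    (B : Fin (m + 1) → PGPt F m) (E : Set (PGPt F n)) : Prop :=
  IsProjBasisOf B (⊤ : Submodule F (Fin (m + 1) → F)) ∧ IsPlane E ∧
  ∀ i : Fin (m + 1), i ≠ 0 →
    (∀ p ∈ E ×ˢ ({B 0, B i} : Set (PGPt F m)), χ p ≠ none) ∧
    3 < Module.rank K ↥(spanOf (mapSet χ (E ×ˢ ({B 0, B i} : Set (PGPt F m)))))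

/-- Condition (ii) on `χ`, w.r.t. the point `A ∈ 𝒫₁`: the image `({A} × 𝒫₂)χ` has
projective dimension `m` (i.e. the vector rank of the span of the image is `m + 1`). -/
def CondII (χ : PGPt F n × PGPt F m → Option (Projectivization K W))
    (A : PGPt F n) : Prop :=
  Module.rank K ↥(spanOf (mapSet χ (({A} : Set (PGPt F n)) ×ˢ (univ : Set (PGPt F m)))))
    = (m : Cardinal) + 1

/-- `ℓ₂` is a special line for the data `χ, γ, φ, α'`: it is a line of `ℙ₂` such that
(a) `({X} × ℓ₂)γφ = ({X} × ℓ₂)αχ` for every `X ∈ 𝒫₁`, and (b) the rank of `αχ`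
restricted to `𝒫₁ × ℓ₂` is greater than `1` (vector rank of the span `> 2`). -/
def SpecialLine (χ : PGPt F n × PGPt F m → Option (Projectivization K W))
    (γ : PGPt F n × PGPt F m → PGPt F (n * m + n + m))
    (φ : PGPt F (n * m + n + m) → Option (Projectivization K W))
    (α' : PGPt F m → PGPt F m) (ℓ₂ : Set (PGPt F m)) : Prop :=
  ℓ₂ ∈ PGLines F m ∧
  (∀ X : PGPt F n,
    mapSet (fun p => φ (γ p)) (({X} : Set (PGPt F n)) ×ˢ ℓ₂) =
      mapSet (fun p : PGPt F n × PGPt F m => χ (p.1, α' p.2))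
        (({X} : Set (PGPt F n)) ×ˢ ℓ₂)) ∧
  2 < Module.rank K ↥(spanOf (mapSet (fun p : PGPt F n × PGPt F m => χ (p.1, α' p.2))
        ((univ : Set (PGPt F n)) ×ˢ ℓ₂)))

end PG

end Segre


namespace Segre

variable {P' Q' R' : Type*}

lemma ptImg_empty {χ : P' → Option Q'} {p : P'} (h : χ p = none) : ptImg χ p = ∅ := by
  ext z; simp [ptImg, h]

lemma sJoin_empty_left (L : Set (Set Q')) (M : Set Q') : sJoin L ∅ M = M := by
  simp [sJoin]

lemma mem_sJoin_line {L : Set (Set P')} {x y z : P'} {g : Set P'} (hg : g ∈ L)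
    (hx : x ∈ g) (hy : y ∈ g) (hz : z ∈ g) (hne : x ≠ y) :
    z ∈ sJoin L {x} {y} := by
  refine Or.inr ?_
  simp only [mem_iUnion]
  exact ⟨x, rfl, y, rfl, ⟨hne, ⟨g, hg, hx, hy⟩⟩, by
    simp only [lineThru, mem_iUnion]; exact ⟨g, ⟨hg, hx, hy⟩, hz⟩⟩

lemma ptImg_subset_of_mem_sJoin {L : Set (Set P')} {L' : Set (Set Q')}
    {χ : P' → Option Q'} (hχ : IsLinMap L L' χ) {x y z : P'}
    (hcol : Collin L x y) (hz : z ∈ sJoin L {x} {y}) (hnone : χ x = none) :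
    ptImg χ z ⊆ ptImg χ y := by
  have hL1 := hχ.1 _ _ hcol
  rw [ptImg_empty hnone, sJoin_empty_left] at hL1
  rw [← hL1]
  intro w hw
  exact mem_biUnion hz hw

/-- Key step, first coordinate: if `R, X, X'` all lie on a line `h` of the first factor,
`R ≠ X`, and `χ (R, Y) = none`, then `{(X',Y)}χ ⊆ {(X,Y)}χ`. -/
lemma key_fst {L₁ : Set (Set P')} {L₂ : Set (Set Q')} {L' : Set (Set R')}
    {χ : P' × Q' → Option R'} (hχ : IsLinMap (prodLines L₁ L₂) L' χ)
    {g : Set P'} (hg : g ∈ L₁) {R X X' : P'} (hR : R ∈ g) (hX : X ∈ g) (hX' : X' ∈ g)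
    (hne : R ≠ X) {Y : Q'} (hnone : χ (R, Y) = none) :
    ptImg χ (X', Y) ⊆ ptImg χ (X, Y) := by
  have hgL : g ×ˢ ({Y} : Set Q') ∈ prodLines L₁ L₂ := Or.inr ⟨g, hg, Y, rfl⟩
  have hcol : Collin (prodLines L₁ L₂) (R, Y) (X, Y) :=
    ⟨g ×ˢ {Y}, hgL, ⟨hR, rfl⟩, ⟨hX, rfl⟩⟩
  refine ptImg_subset_of_mem_sJoin hχ hcol ?_ hnone
  exact mem_sJoin_line hgL ⟨hR, rfl⟩ ⟨hX, rfl⟩ ⟨hX', rfl⟩ (by simp [hne])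

/-- Key step, second coordinate. -/
lemma key_snd {L₁ : Set (Set P')} {L₂ : Set (Set Q')} {L' : Set (Set R')}
    {χ : P' × Q' → Option R'} (hχ : IsLinMap (prodLines L₁ L₂) L' χ)
    {g : Set Q'} (hg : g ∈ L₂) {R Y Y' : Q'} (hR : R ∈ g) (hY : Y ∈ g) (hY' : Y' ∈ g)
    (hne : R ≠ Y) {X : P'} (hnone : χ (X, R) = none) :
    ptImg χ (X, Y') ⊆ ptImg χ (X, Y) := by
  have hgL : ({X} : Set P') ×ˢ g ∈ prodLines L₁ L₂ := Or.inl ⟨X, g, hg, rfl⟩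
  have hcol : Collin (prodLines L₁ L₂) (X, R) (X, Y) :=
    ⟨{X} ×ˢ g, hgL, ⟨rfl, hR⟩, ⟨rfl, hY⟩⟩
  refine ptImg_subset_of_mem_sJoin hχ hcol ?_ hnone
  exact mem_sJoin_line hgL ⟨rfl, hR⟩ ⟨rfl, hY⟩ ⟨rfl, hY'⟩ (by simp [hne])

section Proj
variable {K V : Type*} [Field K] [AddCommGroup V] [Module K V]

lemma submodule_ne_bot (x : Projectivization K V) : x.submodule ≠ ⊥ := by
  rw [Projectivization.submodule_eq]
  simpa [Submodule.span_singleton_eq_bot] using x.rep_nonzero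

end Proj

/-- Reduce membership of a projection image in the join to a useful normal form. -/
lemma sJoin_cases {L : Set (Set P')} {S : Set P'} {X X' : P'}
    (h : X' ∈ sJoin L S {X}) :
    X' ∈ S ∨ X' = X ∨ ∃ R ∈ S, R ≠ X ∧ ∃ g ∈ L, R ∈ g ∧ X ∈ g ∧ X' ∈ g := by
  rcases h with (h | h) | h
  · exact Or.inl h
  · exact Or.inr (Or.inl h)
  · simp only [mem_iUnion] at h
    obtain ⟨R, hRS, x, hx, ⟨hne, -⟩, hline⟩ := h
    rcases hx with rfl
    simp only [lineThru, mem_iUnion] at hline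
    obtain ⟨g, ⟨hgL, hRg, hXg⟩, hX'g⟩ := hline
    exact Or.inr (Or.inr ⟨R, hRS, hne, g, hgL, hRg, hXg, hX'g⟩)

end Segre

open Segre Set in
/-- Proposition `nondegen`: reduction to nondegenerate linear maps via
the projections from the radicals. -/
theorem statement_2 (F : Type*) [Field F] (n m : ℕ) (hn : 2 ≤ n) (hm : 1 ≤ m)
    (K W : Type*) [Field K] [AddCommGroup W] [Module K W]
    (χ : PGPt F n × PGPt F m → Option (Projectivization K W))
    (hχ : IsLinMap (prodLines (PGLines F n) (PGLines F m)) (projLines K W) χ)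
    -- `rad₁ χ` is the subspace of `ℙ₁` given by `R₁`, `D₁` (given by `D₁w`) a
    -- complementary subspace, `π₁` the projection onto `D₁` from `rad₁ χ`
    (R₁ D₁w : Submodule F (Fin (n + 1) → F))
    (hR₁ : {X : PGPt F n | ∀ Y : PGPt F m, χ (X, Y) = none}
      = {x : PGPt F n | x.submodule ≤ R₁})
    (hc₁ : IsCompl R₁ D₁w)
    (π₁ : PGPt F n → Option (PGPt F n))
    (hπ₁none : ∀ X : PGPt F n, π₁ X = none ↔ X.submodule ≤ R₁)
    (hπ₁some : ∀ X X' : PGPt F n, π₁ X = some X' →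
      X'.submodule ≤ D₁w ∧
      X' ∈ sJoin (PGLines F n) {x : PGPt F n | x.submodule ≤ R₁} {X})
    -- `rad₂ χ` is the subspace of `ℙ₂` given by `R₂`, `D₂` (given by `D₂w`) a
    -- complementary subspace, `π₂` the projection onto `D₂` from `rad₂ χ`
    (R₂ D₂w : Submodule F (Fin (m + 1) → F))
    (hR₂ : {Y : PGPt F m | ∀ X : PGPt F n, χ (X, Y) = none}
      = {y : PGPt F m | y.submodule ≤ R₂})
    (hc₂ : IsCompl R₂ D₂w)
    (π₂ : PGPt F m → Option (PGPt F m))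
    (hπ₂none : ∀ Y : PGPt F m, π₂ Y = none ↔ Y.submodule ≤ R₂)
    (hπ₂some : ∀ Y Y' : PGPt F m, π₂ Y = some Y' →
      Y'.submodule ≤ D₂w ∧
      Y' ∈ sJoin (PGLines F m) {y : PGPt F m | y.submodule ≤ R₂} {Y}) :
    -- `{(X, Y)}χ = (Xπ₁ × Yπ₂)χ'` for every `(X, Y)`
    ∀ (X : PGPt F n) (Y : PGPt F m),
      ptImg χ (X, Y) =
        {z : Projectivization K W | ∃ X' Y', π₁ X = some X' ∧ π₂ Y = some Y' ∧
          χ (X', Y') = some z} := by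
  intro X Y
  -- trivial cases: projection undefined
  match hX1 : π₁ X with
  | none =>
    have hXR : X.submodule ≤ R₁ := (hπ₁none X).1 hX1
    have hXn : ∀ Y', χ (X, Y') = none := by
      have : X ∈ {x : PGPt F n | x.submodule ≤ R₁} := hXR
      rw [← hR₁] at this; exact this
    ext z; simp [ptImg, hXn, hX1]
  | some X' =>
  match hY1 : π₂ Y with
  | none =>
    have hYR : Y.submodule ≤ R₂ := (hπ₂none Y).1 hY1
    have hYn : ∀ X'', χ (X'', Y) = none := by
      have : Y ∈ {y : PGPt F m | y.submodule ≤ R₂} := hYR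
      rw [← hR₂] at this; exact this
    ext z; simp [ptImg, hYn, hY1]
  | some Y' =>
  obtain ⟨hX'D, hX'join⟩ := hπ₁some X X' hX1
  obtain ⟨hY'D, hY'join⟩ := hπ₂some Y Y' hY1
  -- step 1 : ptImg χ (X, Y₀) = ptImg χ (X', Y₀) for all Y₀
  have step1 : ∀ Y₀ : PGPt F m, ptImg χ (X, Y₀) = ptImg χ (X', Y₀) := by
    intro Y₀
    rcases sJoin_cases hX'join with h | h | ⟨R, hRS, hne, g, hgL, hRg, hXg, hX'g⟩
    · exact absurd (le_bot_iff.1 (hc₁.inf_eq_bot ▸ le_inf h hX'D))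
        (Segre.submodule_ne_bot X')
    · rw [h]
    · have hRn : χ (R, Y₀) = none := by
        have : R ∈ {x : PGPt F n | ∀ Y, χ (x, Y) = none} := by rw [hR₁]; exact hRS
        exact this Y₀
      have hRX' : R ≠ X' := fun hEq =>
        Segre.submodule_ne_bot X' (le_bot_iff.1 (hc₁.inf_eq_bot ▸ le_inf (hEq ▸ hRS) hX'D))
      exact Set.Subset.antisymm
        (key_fst hχ hgL hRg hX'g hXg hRX' hRn)
        (key_fst hχ hgL hRg hXg hX'g hne hRn)
  -- step 2 : ptImg χ (X', Y) = ptImg χ (X', Y')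
  have step2 : ptImg χ (X', Y) = ptImg χ (X', Y') := by
    rcases sJoin_cases hY'join with h | h | ⟨R, hRS, hne, g, hgL, hRg, hYg, hY'g⟩
    · exact absurd (le_bot_iff.1 (hc₂.inf_eq_bot ▸ le_inf h hY'D))
        (Segre.submodule_ne_bot Y')
    · rw [h]
    · have hRn : χ (X', R) = none := by
        have : R ∈ {y : PGPt F m | ∀ X, χ (X, y) = none} := by rw [hR₂]; exact hRS
        exact this X'
      have hRY' : R ≠ Y' := fun hEq =>
        Segre.submodule_ne_bot Y' (le_bot_iff.1 (hc₂.inf_eq_bot ▸ le_inf (hEq ▸ hRS) hY'D))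
      exact Set.Subset.antisymm
        (key_snd hχ hgL hRg hY'g hYg hRY' hRn)
        (key_snd hχ hgL hRg hYg hY'g hne hRn)
  rw [step1 Y, step2]
  ext z
  simp [ptImg, hX1, hY1]
end

section
/- Let ℓ₁ and ℓ₂ be lines of projective spaces over a commutative field F, let μ: ℓ₁ × ℓ₂ → ℙ' be a linear map of their product into a projective space ℙ', and let A ∈ ℓ₁ be a point such that {A} × ℓ₂ is contained in D(μ). Then the exceptional set A(μ) is either a line of the product (necessarily of the form {P} × ℓ₂ for some P ∈ ℓ₁) or has at most two elements. -/
open Set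

namespace Segre

variable {P Q : Type*}

lemma ptImg_none {χ : P → Option Q} {X : P} (h : χ X = none) : ptImg χ X = ∅ := by
  ext y; simp [ptImg, h]

lemma ptImg_some {χ : P → Option Q} {X : P} {x : Q} (h : χ X = some x) :
    ptImg χ X = {x} := by
  ext y; simp [ptImg, h, eq_comm]

lemma mem_lineThru {L : Set (Set P)} {g : Set P} (hg : g ∈ L) {X Y R : P}
    (hX : X ∈ g) (hY : Y ∈ g) (hR : R ∈ g) : R ∈ lineThru L X Y := by
  exact mem_biUnion (by exact ⟨hg, hX, hY⟩) hR

lemma lineThru_subset_sJoin {L : Set (Set P)} {X Y : P} (hne : X ≠ Y)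
    (hc : Collin L X Y) : lineThru L X Y ⊆ sJoin L {X} {Y} := by
  intro R hR
  refine Or.inr ?_
  simp only [mem_iUnion, mem_singleton_iff]
  exact ⟨X, rfl, Y, rfl, ⟨hne, hc⟩, hR⟩

lemma ptImg_subset_mapSet {χ : P → Option Q} {M : Set P} {X : P} (hX : X ∈ M) :
    ptImg χ X ⊆ mapSet χ M := subset_biUnion_of_mem hX

/-- Lemma A: two distinct exceptional points on a line make the whole line exceptional. -/
lemma all_none {L : Set (Set P)} {L' : Set (Set Q)} {χ : P → Option Q}
    (hχ : IsLinMap L L' χ) {g : Set P} (hg : g ∈ L) {X Y : P}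
    (hX : X ∈ g) (hY : Y ∈ g) (hne : X ≠ Y) (hX0 : χ X = none) (hY0 : χ Y = none) :
    ∀ R ∈ g, χ R = none := by
  intro R hR
  have hc : Collin L X Y := ⟨g, hg, hX, hY⟩
  have h1 := hχ.1 X Y hc
  rw [ptImg_none hX0, ptImg_none hY0] at h1
  have h2 : sJoin L' (∅ : Set Q) ∅ = ∅ := by simp [sJoin]
  rw [h2] at h1
  cases hRv : χ R with
  | none => rfl
  | some y =>
    exfalso
    have hmem : R ∈ sJoin L {X} {Y} :=
      lineThru_subset_sJoin hne hc (mem_lineThru hg hX hY hR)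
    have : y ∈ mapSet χ (sJoin L {X} {Y}) :=
      ptImg_subset_mapSet hmem (by simp [ptImg, hRv])
    rw [h1] at this
    exact this

/-- Lemma B: on a line with an exceptional point and a point mapped to `x`,
every point maps to `none` or to `x`. -/
lemma const_on_line {L : Set (Set P)} {L' : Set (Set Q)} {χ : P → Option Q}
    (hχ : IsLinMap L L' χ) {g : Set P} (hg : g ∈ L) {X Z : P} {x : Q}
    (hX : X ∈ g) (hZ : Z ∈ g) (hne : X ≠ Z) (hXs : χ X = some x) (hZ0 : χ Z = none) :
    ∀ R ∈ g, χ R = none ∨ χ R = some x := by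
  intro R hR
  have hc : Collin L X Z := ⟨g, hg, hX, hZ⟩
  have h1 := hχ.1 X Z hc
  rw [ptImg_some hXs, ptImg_none hZ0] at h1
  have h2 : sJoin L' ({x} : Set Q) ∅ = {x} := by simp [sJoin]
  rw [h2] at h1
  cases hRv : χ R with
  | none => exact Or.inl rfl
  | some y =>
    right
    have hmem : R ∈ sJoin L {X} {Z} :=
      lineThru_subset_sJoin hne hc (mem_lineThru hg hX hZ hR)
    have : y ∈ mapSet χ (sJoin L {X} {Z}) :=
      ptImg_subset_mapSet hmem (by simp [ptImg, hRv])
    rw [h1, mem_singleton_iff] at this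
    rw [this]


end Segre

open Segre Set in
/-- Proposition `slm`, first part: the exceptional set of a linear map
on a product of two lines with one full column in the domain is a line or has at most
two elements. -/
theorem statement_3 (F : Type*) [Field F]
    (V₁ V₂ : Type*) [AddCommGroup V₁] [Module F V₁] [AddCommGroup V₂] [Module F V₂]
    (K W : Type*) [Field K] [AddCommGroup W] [Module K W]
    (ℓ₁ : Set (Projectivization F V₁)) (hℓ₁ : ℓ₁ ∈ projLines F V₁)
    (ℓ₂ : Set (Projectivization F V₂)) (hℓ₂ : ℓ₂ ∈ projLines F V₂)
    (μ : Projectivization F V₁ × Projectivization F V₂ → Option (Projectivization K W))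
    (hμ : IsLinMap (lineProdLines ℓ₁ ℓ₂) (projLines K W) μ)
    (A : Projectivization F V₁) (hA : A ∈ ℓ₁)
    (hdom : ∀ Y ∈ ℓ₂, μ (A, Y) ≠ none) :
    (∃ P ∈ ℓ₁,
      {q ∈ ℓ₁ ×ˢ ℓ₂ | μ q = none} = ({P} : Set (Projectivization F V₁)) ×ˢ ℓ₂) ∨
    Set.encard {q ∈ ℓ₁ ×ˢ ℓ₂ | μ q = none} ≤ 2 := by
  classical
  set E := {q ∈ ℓ₁ ×ˢ ℓ₂ | μ q = none} with hEdef
  have hcolL : ∀ X ∈ ℓ₁, ({X} : Set (Projectivization F V₁)) ×ˢ ℓ₂ ∈ lineProdLines ℓ₁ ℓ₂ :=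
    fun X hX => Or.inl ⟨X, hX, rfl⟩
  have hrowL : ∀ Y ∈ ℓ₂, ℓ₁ ×ˢ ({Y} : Set (Projectivization F V₂)) ∈ lineProdLines ℓ₁ ℓ₂ :=
    fun Y hY => Or.inr ⟨Y, hY, rfl⟩
  -- each row contains at most one exceptional point
  have hrowE : ∀ {Y X X'}, (X, Y) ∈ E → (X', Y) ∈ E → X = X' := by
    intro Y X X' h1 h2
    by_contra hne
    have hY2 : Y ∈ ℓ₂ := h1.1.2
    have hall := all_none hμ (hrowL Y hY2) (X := (X, Y)) (Y := (X', Y))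
      ⟨h1.1.1, rfl⟩ ⟨h2.1.1, rfl⟩ (fun h => hne (congrArg Prod.fst h)) h1.2 h2.2
    exact hdom Y hY2 (hall (A, Y) ⟨hA, rfl⟩)
  -- injectivity on the column {A} × ℓ₂
  have hAinj : ∀ {Y Y'}, Y ∈ ℓ₂ → Y' ∈ ℓ₂ → Y ≠ Y' → μ (A, Y) ≠ μ (A, Y') := by
    intro Y Y' hY hY' hne heq
    have hc : Collin (lineProdLines ℓ₁ ℓ₂) (A, Y) (A, Y') :=
      ⟨_, hcolL A hA, ⟨rfl, hY⟩, ⟨rfl, hY'⟩⟩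
    obtain ⟨Z, hZ, hZ0⟩ := hμ.2 (A, Y) (A, Y') hc
      (fun h => hne (congrArg Prod.snd h)) (by simp only [ptImg, heq])
    simp only [lineThru, mem_iUnion, exists_prop] at hZ
    obtain ⟨g, ⟨hg, hg1, hg2⟩, hZg⟩ := hZ
    obtain ⟨Z₁, Z₂⟩ := Z
    rcases hg with ⟨X₀, hX₀, rfl⟩ | ⟨Y₀, hY₀, rfl⟩
    · have hX₀A : (A : Projectivization F V₁) = X₀ := hg1.1
      have hZ1 : Z₁ = X₀ := hZg.1
      have : μ (A, Z₂) = none := by rw [hX₀A, ← hZ1]; exact hZ0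
      exact hdom Z₂ hZg.2 this
    · exact hne (hg1.2.trans hg2.2.symm)
  by_cases hcase : ∃ X, ∃ Y ∈ ℓ₂, ∃ Y' ∈ ℓ₂, Y ≠ Y' ∧ (X, Y) ∈ E ∧ (X, Y') ∈ E
  · -- a column contains two exceptional points: E is that whole column
    obtain ⟨X, Y, hY, Y', hY', hYne, h1, h2⟩ := hcase
    left
    have hX1 : X ∈ ℓ₁ := h1.1.1
    have hcolnone : ∀ R ∈ ({X} : Set (Projectivization F V₁)) ×ˢ ℓ₂, μ R = none :=
      all_none hμ (hcolL X hX1) (X := (X, Y)) (Y := (X, Y')) ⟨rfl, hY⟩ ⟨rfl, hY'⟩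
        (fun h => hYne (congrArg Prod.snd h)) h1.2 h2.2
    refine ⟨X, hX1, ?_⟩
    ext ⟨x, y⟩
    constructor
    · rintro ⟨⟨hx1, hy2⟩, hnone⟩
      have hXy : (X, y) ∈ E := ⟨⟨hX1, hy2⟩, hcolnone (X, y) ⟨rfl, hy2⟩⟩
      have hxX : x = X := hrowE ⟨⟨hx1, hy2⟩, hnone⟩ hXy
      exact ⟨hxX, hy2⟩
    · rintro ⟨hx, hy⟩
      have hx' : x = X := hx
      subst hx'
      exact ⟨⟨hX1, hy⟩, hcolnone (x, y) ⟨rfl, hy⟩⟩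
  · right
    by_cases htriv : ∀ a ∈ E, ∀ b ∈ E, a = b
    · exact le_trans (Set.encard_le_one_iff.mpr fun a b ha hb => htriv a ha b hb) one_le_two
    · push_neg at htriv
      obtain ⟨a, ha, b, hb, hab⟩ := htriv
      have hsub : E ⊆ {a, b} := by
        intro c hc
        by_contra hcnot
        simp only [mem_insert_iff, mem_singleton_iff, not_or] at hcnot
        obtain ⟨hca, hcb⟩ := hcnot
        obtain ⟨X₁, Y₁⟩ := a
        obtain ⟨X₂, Y₂⟩ := b
        obtain ⟨X₃, Y₃⟩ := c
        have hX₁ℓ : X₁ ∈ ℓ₁ := ha.1.1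
        have hY₁ℓ : Y₁ ∈ ℓ₂ := ha.1.2
        have hX₂ℓ : X₂ ∈ ℓ₁ := hb.1.1
        have hY₂ℓ : Y₂ ∈ ℓ₂ := hb.1.2
        have hX₃ℓ : X₃ ∈ ℓ₁ := hc.1.1
        have hY₃ℓ : Y₃ ∈ ℓ₂ := hc.1.2
        -- pairwise distinct second coordinates
        have hY12 : Y₁ ≠ Y₂ := by
          intro h; subst h; exact hab (by rw [hrowE ha hb])
        have hY13 : Y₁ ≠ Y₃ := by
          intro h; subst h; exact hca (by rw [hrowE hc ha])
        have hY23 : Y₂ ≠ Y₃ := by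
          intro h; subst h; exact hcb (by rw [hrowE hc hb])
        -- pairwise distinct first coordinates
        have hX12 : X₁ ≠ X₂ := fun h =>
          hcase ⟨X₁, Y₁, hY₁ℓ, Y₂, hY₂ℓ, hY12, ha, h ▸ hb⟩
        have hX13 : X₁ ≠ X₃ := fun h =>
          hcase ⟨X₁, Y₁, hY₁ℓ, Y₃, hY₃ℓ, hY13, ha, h ▸ hc⟩
        -- A is in none of the exceptional columns
        have hAX₂ : A ≠ X₂ := fun h => hdom Y₂ hY₂ℓ (h ▸ hb.2)
        have hAX₃ : A ≠ X₃ := fun h => hdom Y₃ hY₃ℓ (h ▸ hc.2)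
        -- values
        obtain ⟨v₂, hv₂⟩ : ∃ v, μ (A, Y₂) = some v :=
          Option.ne_none_iff_exists'.mp (hdom Y₂ hY₂ℓ)
        obtain ⟨v₃, hv₃⟩ : ∃ v, μ (A, Y₃) = some v :=
          Option.ne_none_iff_exists'.mp (hdom Y₃ hY₃ℓ)
        have h12ne : μ (X₁, Y₂) ≠ none := fun h =>
          hX12 (hrowE (⟨⟨hX₁ℓ, hY₂ℓ⟩, h⟩ : (X₁, Y₂) ∈ E) hb)
        have h13ne : μ (X₁, Y₃) ≠ none := fun h =>
          hX13 (hrowE (⟨⟨hX₁ℓ, hY₃ℓ⟩, h⟩ : (X₁, Y₃) ∈ E) hc)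
        obtain ⟨b₂, hb₂⟩ : ∃ v, μ (X₁, Y₂) = some v := Option.ne_none_iff_exists'.mp h12ne
        obtain ⟨b₃, hb₃⟩ : ∃ v, μ (X₁, Y₃) = some v := Option.ne_none_iff_exists'.mp h13ne
        -- column X₁ forces b₂ = b₃
        have hcol1 := const_on_line hμ (hcolL X₁ hX₁ℓ) (X := (X₁, Y₂)) (Z := (X₁, Y₁))
          ⟨rfl, hY₂ℓ⟩ ⟨rfl, hY₁ℓ⟩ (fun h => hY12 (congrArg Prod.snd h).symm) hb₂ ha.2
          (X₁, Y₃) ⟨rfl, hY₃ℓ⟩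
        have hb23 : b₃ = b₂ := by
          rcases hcol1 with h | h
          · exact absurd h h13ne
          · exact Option.some.inj (hb₃.symm.trans h)
        -- row Y₂ forces b₂ = v₂
        have hrow2 := const_on_line hμ (hrowL Y₂ hY₂ℓ) (X := (A, Y₂)) (Z := (X₂, Y₂))
          ⟨hA, rfl⟩ ⟨hX₂ℓ, rfl⟩ (fun h => hAX₂ (congrArg Prod.fst h)) hv₂ hb.2
          (X₁, Y₂) ⟨hX₁ℓ, rfl⟩
        have hb2v : b₂ = v₂ := by
          rcases hrow2 with h | h
          · exact absurd h h12ne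
          · exact Option.some.inj (hb₂.symm.trans h)
        -- row Y₃ forces b₃ = v₃
        have hrow3 := const_on_line hμ (hrowL Y₃ hY₃ℓ) (X := (A, Y₃)) (Z := (X₃, Y₃))
          ⟨hA, rfl⟩ ⟨hX₃ℓ, rfl⟩ (fun h => hAX₃ (congrArg Prod.fst h)) hv₃ hc.2
          (X₁, Y₃) ⟨hX₁ℓ, rfl⟩
        have hb3v : b₃ = v₃ := by
          rcases hrow3 with h | h
          · exact absurd h h13ne
          · exact Option.some.inj (hb₃.symm.trans h)
        exact hAinj hY₂ℓ hY₃ℓ hY23 (by rw [hv₂, hv₃, ← hb2v, ← hb3v, hb23])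
      calc E.encard ≤ ({a, b} : Set _).encard := Set.encard_mono hsub
        _ = 2 := Set.encard_pair hab
end

section
/- Let ℓ₁ and ℓ₂ be lines of projective spaces over a commutative field F, let μ: ℓ₁ × ℓ₂ → ℙ' be a linear map of their product into a projective space ℙ', and let A ∈ ℓ₁ be a point such that {A} × ℓ₂ is contained in D(μ). Suppose the exceptional set A(μ) consists of exactly one point (X₁, P). Then for every X ∈ ℓ₁ ∖ {A, X₁} one of the following holds: (a) ({A} × ℓ₂)μ = ({X} × ℓ₂)μ, and in this case ({X₁} × ℓ₂)μ = {(A, P)μ}; or (b) ({A} × ℓ₂)μ ∩ ({X} × ℓ₂)μ = {(A, P)μ}. -/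
open Set

/-!
Away from the exceptional point `(X₁, P)` every row `ℓ₁ × {Y}` and column `{X} × ℓ₂` is mapped
injectively (L2) onto a line of `ℙ'` (L1), while the row `ℓ₁ × {P}` collapses to the point
`a = (A, P)μ`. So the images of the columns of `A` and `X` are lines through `a`: either they
meet only in `a`, or they coincide. In the latter case every row `ℓ₁ × {Y}` with `Y ≠ P` is
mapped onto that same line, hence one of its points takes the value `a`; this point cannot lie
on a column `X' ≠ X₁`, which already takes the value `a` at `(X', P)`. Hence `(X₁, Y)μ = a`
for all `Y ≠ P`.
-/

open Set Projectivization
open scoped LinearAlgebra.Projectivization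

namespace Segre

section Join

variable {P Q : Type*} {L : Set (Set P)} {x y : P}

lemma lineThru_eq {g : Set P} (hg : g ∈ L) (hx : x ∈ g) (hy : y ∈ g)
    (huniq : ∀ g' ∈ L, x ∈ g' → y ∈ g' → g' = g) : lineThru L x y = g := by
  refine Subset.antisymm (iUnion₂_subset ?_) (subset_biUnion_of_mem (u := id) ⟨hg, hx, hy⟩)
  rintro g' ⟨hg', hx', hy'⟩
  rw [huniq g' hg' hx' hy']

lemma left_mem_lineThru (hc : Collin L x y) : x ∈ lineThru L x y :=
  let ⟨_, hg, hx, hy⟩ := hc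
  mem_biUnion ⟨hg, hx, hy⟩ hx

lemma right_mem_lineThru (hc : Collin L x y) : y ∈ lineThru L x y :=
  let ⟨_, hg, hx, hy⟩ := hc
  mem_biUnion ⟨hg, hx, hy⟩ hy

lemma sJoin_singleton_singleton (hne : x ≠ y) (hc : Collin L x y) :
    sJoin L {x} {y} = lineThru L x y := by
  simp only [sJoin, biUnion_singleton, ne_eq, hne, not_false_eq_true, hc, and_self, iUnion_true]
  exact union_eq_right.2 (union_subset (singleton_subset_iff.2 (left_mem_lineThru hc))
    (singleton_subset_iff.2 (right_mem_lineThru hc)))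

lemma sJoin_empty_right (M : Set P) : sJoin L M ∅ = M := by
  simp [sJoin]

variable {χ : P → Option Q} {p : P} {a : Q}

lemma ptImg_of_eq_some (h : χ p = some a) : ptImg χ p = {a} := by
  ext; simp [ptImg, h, eq_comm]

lemma ptImg_of_eq_none (h : χ p = none) : ptImg χ p = ∅ := by
  ext; simp [ptImg, h]

lemma mem_mapSet {M : Set P} : a ∈ mapSet χ M ↔ ∃ p ∈ M, χ p = some a := by
  simp [mapSet, ptImg]

lemma mapSet_eq_singleton {M : Set P} (h : ∀ p ∈ M, χ p = none ∨ χ p = some a)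
    (hex : ∃ p ∈ M, χ p = some a) : mapSet χ M = {a} := by
  refine Subset.antisymm (fun b hb => ?_) (singleton_subset_iff.2 (mem_mapSet.2 hex))
  obtain ⟨p, hp, hpb⟩ := mem_mapSet.1 hb
  rcases h p hp with hpn | hpa
  · simp [hpn] at hpb
  · exact Option.some_injective _ (hpb.symm.trans hpa)

end Join

section Projective

variable {K W : Type*} [Field K] [AddCommGroup W] [Module K W] {a b c d u v x y : ℙ K W}

lemma left_mem_projLineThrough (x y : ℙ K W) : x ∈ projLineThrough x y :=
  show x.submodule ≤ _ from le_sup_left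

lemma right_mem_projLineThrough (x y : ℙ K W) : y ∈ projLineThrough x y :=
  show y.submodule ≤ _ from le_sup_right

lemma finrank_submodule_sup_submodule (h : x ≠ y) :
    Module.finrank K ↥(x.submodule ⊔ y.submodule) = 2 := by
  have hli : LinearIndependent K ![x.rep, y.rep] := by
    convert independent_iff.1 ((independent_pair_iff_ne x y).2 h) using 1
    ext i
    fin_cases i <;> rfl
  rw [x.submodule_eq, y.submodule_eq, ← Submodule.span_union, singleton_union,
    ← Matrix.range_cons_cons_empty _ _ ![], finrank_span_eq_card hli]
  simp

lemma projLineThrough_eq_of_mem (huv : u ≠ v) (hxy : x ≠ y) (hx : x ∈ projLineThrough u v)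
    (hy : y ∈ projLineThrough u v) : projLineThrough x y = projLineThrough u v := by
  have : FiniteDimensional K ↥(u.submodule ⊔ v.submodule) :=
    Module.finite_of_finrank_eq_succ (finrank_submodule_sup_submodule huv)
  have heq : x.submodule ⊔ y.submodule = u.submodule ⊔ v.submodule :=
    Submodule.eq_of_le_of_finrank_le (sup_le hx hy)
      (by rw [finrank_submodule_sup_submodule huv, finrank_submodule_sup_submodule hxy])
  simp only [projLineThrough, heq]

lemma projLineThrough_inter_eq_singleton (hcd : c ≠ d) (hcd' : u ≠ v)
    (hne : projLineThrough c d ≠ projLineThrough u v) (ha : a ∈ projLineThrough c d)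
    (ha' : a ∈ projLineThrough u v) : projLineThrough c d ∩ projLineThrough u v = {a} := by
  refine Subset.antisymm (fun b ⟨hb, hb'⟩ => ?_) (singleton_subset_iff.2 ⟨ha, ha'⟩)
  by_contra hba
  apply hne
  rw [← projLineThrough_eq_of_mem hcd hba hb ha, projLineThrough_eq_of_mem hcd' hba hb' ha']

lemma projLineThrough_mem_projLines (h : a ≠ b) : projLineThrough a b ∈ projLines K W :=
  ⟨a, b, h, rfl⟩

lemma nontrivial_of_mem_projLines {ℓ : Set (ℙ K W)} (h : ℓ ∈ projLines K W) : ℓ.Nontrivial := by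
  obtain ⟨u, v, huv, rfl⟩ := h
  exact ⟨u, left_mem_projLineThrough u v, v, right_mem_projLineThrough u v, huv⟩

lemma sJoin_projLines (h : a ≠ b) : sJoin (projLines K W) {a} {b} = projLineThrough a b := by
  rw [sJoin_singleton_singleton h ⟨_, projLineThrough_mem_projLines h,
    left_mem_projLineThrough a b, right_mem_projLineThrough a b⟩]
  refine lineThru_eq (projLineThrough_mem_projLines h) (left_mem_projLineThrough a b)
    (right_mem_projLineThrough a b) ?_
  rintro _ ⟨u, v, huv, rfl⟩ ha hb
  exact (projLineThrough_eq_of_mem huv h ha hb).symm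

end Projective

section LineProd

variable {P₁ P₂ : Type*} {ℓ₁ : Set P₁} {ℓ₂ : Set P₂} {X X' : P₁} {Y Y' : P₂}

lemma singleton_prod_mem_lineProdLines (hX : X ∈ ℓ₁) : {X} ×ˢ ℓ₂ ∈ lineProdLines ℓ₁ ℓ₂ :=
  Or.inl ⟨X, hX, rfl⟩

lemma prod_singleton_mem_lineProdLines (hY : Y ∈ ℓ₂) : ℓ₁ ×ˢ {Y} ∈ lineProdLines ℓ₁ ℓ₂ :=
  Or.inr ⟨Y, hY, rfl⟩

lemma collin_lineProdLines_column (hX : X ∈ ℓ₁) (hY : Y ∈ ℓ₂) (hY' : Y' ∈ ℓ₂) :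
    Collin (lineProdLines ℓ₁ ℓ₂) (X, Y) (X, Y') :=
  ⟨_, singleton_prod_mem_lineProdLines hX, by simp [hY], by simp [hY']⟩

lemma collin_lineProdLines_row (hX : X ∈ ℓ₁) (hX' : X' ∈ ℓ₁) (hY : Y ∈ ℓ₂) :
    Collin (lineProdLines ℓ₁ ℓ₂) (X, Y) (X', Y) :=
  ⟨_, prod_singleton_mem_lineProdLines hY, by simp [hX], by simp [hX']⟩

lemma lineThru_lineProdLines_column (hX : X ∈ ℓ₁) (hY : Y ∈ ℓ₂) (hY' : Y' ∈ ℓ₂)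
    (hne : Y ≠ Y') : lineThru (lineProdLines ℓ₁ ℓ₂) (X, Y) (X, Y') = {X} ×ˢ ℓ₂ := by
  refine lineThru_eq (singleton_prod_mem_lineProdLines hX) (by simp [hY]) (by simp [hY']) ?_
  rintro _ (⟨X'', -, rfl⟩ | ⟨Y'', -, rfl⟩) h h'
  · simp only [mem_prod, mem_singleton_iff] at h
    rw [h.1]
  · simp only [mem_prod, mem_singleton_iff] at h h'
    exact absurd (h.2.trans h'.2.symm) hne

lemma lineThru_lineProdLines_row (hX : X ∈ ℓ₁) (hX' : X' ∈ ℓ₁) (hY : Y ∈ ℓ₂)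
    (hne : X ≠ X') : lineThru (lineProdLines ℓ₁ ℓ₂) (X, Y) (X', Y) = ℓ₁ ×ˢ {Y} := by
  refine lineThru_eq (prod_singleton_mem_lineProdLines hY) (by simp [hX]) (by simp [hX']) ?_
  rintro _ (⟨X'', -, rfl⟩ | ⟨Y'', -, rfl⟩) h h'
  · simp only [mem_prod, mem_singleton_iff] at h h'
    exact absurd (h.1.trans h'.1.symm) hne
  · simp only [mem_prod, mem_singleton_iff] at h
    rw [h.2]

lemma sJoin_lineProdLines_column (hX : X ∈ ℓ₁) (hY : Y ∈ ℓ₂) (hY' : Y' ∈ ℓ₂) (hne : Y ≠ Y') :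
    sJoin (lineProdLines ℓ₁ ℓ₂) {(X, Y)} {(X, Y')} = {X} ×ˢ ℓ₂ := by
  rw [sJoin_singleton_singleton (by simpa using hne) (collin_lineProdLines_column hX hY hY'),
    lineThru_lineProdLines_column hX hY hY' hne]

lemma sJoin_lineProdLines_row (hX : X ∈ ℓ₁) (hX' : X' ∈ ℓ₁) (hY : Y ∈ ℓ₂) (hne : X ≠ X') :
    sJoin (lineProdLines ℓ₁ ℓ₂) {(X, Y)} {(X', Y)} = ℓ₁ ×ˢ {Y} := by
  rw [sJoin_singleton_singleton (by simpa using hne) (collin_lineProdLines_row hX hX' hY),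
    lineThru_lineProdLines_row hX hX' hY hne]

end LineProd

namespace IsLinMap

variable {P Q K W : Type*} [Field K] [AddCommGroup W] [Module K W] {L : Set (Set P)}
  {L' : Set (Set Q)} {χ : P → Option Q} {x y : P}

theorem apply_ne (hχ : IsLinMap L L' χ) (hc : Collin L x y) (hne : x ≠ y)
    (hdef : ∀ z ∈ lineThru L x y, χ z ≠ none) : χ x ≠ χ y := fun h => by
  obtain ⟨z, hz, hnone⟩ := hχ.2 x y hc hne (by simp only [ptImg, h])
  exact hdef z hz hnone

theorem mapSet_sJoin_of_eq_none (hχ : IsLinMap L L' χ) (hc : Collin L x y) {a : Q}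
    (hx : χ x = some a) (hy : χ y = none) : mapSet χ (sJoin L {x} {y}) = {a} := by
  rw [hχ.1 x y hc, ptImg_of_eq_some hx, ptImg_of_eq_none hy, sJoin_empty_right]

theorem exists_mapSet_sJoin_eq_projLineThrough {χ : P → Option (ℙ K W)}
    (hχ : IsLinMap L (projLines K W) χ) (hc : Collin L x y) (hne : x ≠ y)
    (hdef : ∀ z ∈ lineThru L x y, χ z ≠ none) :
    ∃ c d, c ≠ d ∧ χ x = some c ∧ χ y = some d ∧
      mapSet χ (sJoin L {x} {y}) = projLineThrough c d := by
  obtain ⟨c, hxc⟩ := Option.ne_none_iff_exists'.1 (hdef x (left_mem_lineThru hc))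
  obtain ⟨d, hyd⟩ := Option.ne_none_iff_exists'.1 (hdef y (right_mem_lineThru hc))
  have hcd : c ≠ d := by
    rintro rfl
    exact hχ.apply_ne hc hne hdef (hxc.trans hyd.symm)
  refine ⟨c, d, hcd, hxc, hyd, ?_⟩
  rw [hχ.1 x y hc, ptImg_of_eq_some hxc, ptImg_of_eq_some hyd, sJoin_projLines hcd]

section

variable {P₁ P₂ : Type*} {ℓ₁ : Set P₁} {ℓ₂ : Set P₂} {X : P₁} {Y Y' : P₂}

theorem apply_column_ne {μ : P₁ × P₂ → Option Q} (hμ : IsLinMap (lineProdLines ℓ₁ ℓ₂) L' μ)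
    (hX : X ∈ ℓ₁) (hdef : ∀ Y ∈ ℓ₂, μ (X, Y) ≠ none) (hY : Y ∈ ℓ₂) (hY' : Y' ∈ ℓ₂)
    (hne : Y ≠ Y') : μ (X, Y) ≠ μ (X, Y') := by
  refine hμ.apply_ne (collin_lineProdLines_column hX hY hY') (by simpa using hne) ?_
  rw [lineThru_lineProdLines_column hX hY hY' hne]
  rintro ⟨_, Y''⟩ ⟨rfl, hY''⟩
  exact hdef Y'' hY''

theorem exists_mapSet_column_eq_projLineThrough {μ : P₁ × P₂ → Option (ℙ K W)}
    (hμ : IsLinMap (lineProdLines ℓ₁ ℓ₂) (projLines K W) μ) (hℓ₂ : ℓ₂.Nontrivial) (hX : X ∈ ℓ₁)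
    (hdef : ∀ Y ∈ ℓ₂, μ (X, Y) ≠ none) :
    ∃ c d, c ≠ d ∧ mapSet μ ({X} ×ˢ ℓ₂) = projLineThrough c d := by
  obtain ⟨Y, hY, Y', hY', hne⟩ := hℓ₂
  obtain ⟨c, d, hcd, -, -, himg⟩ := hμ.exists_mapSet_sJoin_eq_projLineThrough
    (collin_lineProdLines_column hX hY hY') (by simpa using hne) (by
      rw [lineThru_lineProdLines_column hX hY hY' hne]
      rintro ⟨_, Y''⟩ ⟨rfl, hY''⟩
      exact hdef Y'' hY'')
  exact ⟨c, d, hcd, by rwa [sJoin_lineProdLines_column hX hY hY' hne] at himg⟩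

end

end IsLinMap

section OneExceptionalPoint

variable {P₁ P₂ K W : Type*} [Field K] [AddCommGroup W] [Module K W] {ℓ₁ : Set P₁} {ℓ₂ : Set P₂}
  {μ : P₁ × P₂ → Option (ℙ K W)} {A X X₁ : P₁} {P Y : P₂} {a : ℙ K W}

lemma apply_ne_none_of_ne_exceptional (hexc : {q ∈ ℓ₁ ×ˢ ℓ₂ | μ q = none} = {(X₁, P)})
    {q : P₁ × P₂} (hq : q ∈ ℓ₁ ×ˢ ℓ₂) (hne : q ≠ (X₁, P)) : μ q ≠ none := fun hnone => by
  have hq' : q ∈ {q ∈ ℓ₁ ×ˢ ℓ₂ | μ q = none} := ⟨hq, hnone⟩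
  rw [hexc] at hq'
  exact hne hq'

lemma apply_column_ne_none (hexc : {q ∈ ℓ₁ ×ˢ ℓ₂ | μ q = none} = {(X₁, P)}) (hX : X ∈ ℓ₁)
    (hXX₁ : X ≠ X₁) : ∀ Y ∈ ℓ₂, μ (X, Y) ≠ none := fun _ hY =>
  apply_ne_none_of_ne_exceptional hexc ⟨hX, hY⟩ (by simp [hXX₁])

lemma ne_exceptional_of_apply_eq_some (hexc : {q ∈ ℓ₁ ×ˢ ℓ₂ | μ q = none} = {(X₁, P)})
    (ha : μ (A, P) = some a) : A ≠ X₁ := by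
  rintro rfl
  have hnone : (A, P) ∈ {q ∈ ℓ₁ ×ˢ ℓ₂ | μ q = none} := hexc ▸ rfl
  simp [ha] at hnone

lemma apply_exceptional_row_eq (hμ : IsLinMap (lineProdLines ℓ₁ ℓ₂) (projLines K W) μ)
    (hexc : {q ∈ ℓ₁ ×ˢ ℓ₂ | μ q = none} = {(X₁, P)}) (hA : A ∈ ℓ₁) (ha : μ (A, P) = some a)
    (hX : X ∈ ℓ₁) (hXX₁ : X ≠ X₁) : μ (X, P) = some a := by
  obtain ⟨⟨hX₁, hP⟩, hnone⟩ : (X₁, P) ∈ {q ∈ ℓ₁ ×ˢ ℓ₂ | μ q = none} := hexc ▸ rfl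
  have hAX₁ := ne_exceptional_of_apply_eq_some hexc ha
  have hrow : mapSet μ (ℓ₁ ×ˢ {P}) = {a} := by
    rw [← sJoin_lineProdLines_row hA hX₁ hP hAX₁]
    exact hμ.mapSet_sJoin_of_eq_none (collin_lineProdLines_row hA hX₁ hP) ha hnone
  obtain ⟨b, hb⟩ := Option.ne_none_iff_exists'.1 (apply_column_ne_none hexc hX hXX₁ P hP)
  have hb' : b ∈ mapSet μ (ℓ₁ ×ˢ {P}) := mem_mapSet.2 ⟨(X, P), ⟨hX, rfl⟩, hb⟩
  rw [hrow, mem_singleton_iff] at hb'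
  rw [hb, hb']

lemma mapSet_row_eq_mapSet_column (hμ : IsLinMap (lineProdLines ℓ₁ ℓ₂) (projLines K W) μ)
    (hexc : {q ∈ ℓ₁ ×ˢ ℓ₂ | μ q = none} = {(X₁, P)}) (hA : A ∈ ℓ₁) (hX : X ∈ ℓ₁) (hXA : X ≠ A)
    (hcol : mapSet μ ({A} ×ˢ ℓ₂) = mapSet μ ({X} ×ˢ ℓ₂)) {c d : ℙ K W} (hcd : c ≠ d)
    (hgA : mapSet μ ({A} ×ˢ ℓ₂) = projLineThrough c d) (hY : Y ∈ ℓ₂) (hYP : Y ≠ P) :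
    mapSet μ (ℓ₁ ×ˢ {Y}) = mapSet μ ({A} ×ˢ ℓ₂) := by
  obtain ⟨b, b', hbb', hb, hb', himg⟩ := hμ.exists_mapSet_sJoin_eq_projLineThrough
    (collin_lineProdLines_row hA hX hY) (by simpa using hXA.symm) (by
      rw [lineThru_lineProdLines_row hA hX hY hXA.symm]
      rintro ⟨X', _⟩ ⟨hX', rfl⟩
      exact apply_ne_none_of_ne_exceptional hexc ⟨hX', hY⟩ (by simp [hYP]))
  rw [← sJoin_lineProdLines_row hA hX hY hXA.symm, himg, hgA]
  refine projLineThrough_eq_of_mem hcd hbb' ?_ ?_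
  · rw [← hgA]
    exact mem_mapSet.2 ⟨(A, Y), ⟨rfl, hY⟩, hb⟩
  · rw [← hgA, hcol]
    exact mem_mapSet.2 ⟨(X, Y), ⟨rfl, hY⟩, hb'⟩

lemma mapSet_exceptional_column_eq (hμ : IsLinMap (lineProdLines ℓ₁ ℓ₂) (projLines K W) μ)
    (hexc : {q ∈ ℓ₁ ×ˢ ℓ₂ | μ q = none} = {(X₁, P)}) (hℓ₂ : ℓ₂.Nontrivial) (hA : A ∈ ℓ₁)
    (hX : X ∈ ℓ₁) (hXA : X ≠ A) (ha : μ (A, P) = some a)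
    (hcol : mapSet μ ({A} ×ˢ ℓ₂) = mapSet μ ({X} ×ˢ ℓ₂)) :
    mapSet μ ({X₁} ×ˢ ℓ₂) = {a} := by
  obtain ⟨⟨-, hP⟩, hnone⟩ : (X₁, P) ∈ {q ∈ ℓ₁ ×ˢ ℓ₂ | μ q = none} := hexc ▸ rfl
  obtain ⟨c, d, hcd, hgA⟩ := hμ.exists_mapSet_column_eq_projLineThrough hℓ₂ hA
    (apply_column_ne_none hexc hA (ne_exceptional_of_apply_eq_some hexc ha))
  have hcolumn : ∀ Y ∈ ℓ₂, Y ≠ P → μ (X₁, Y) = some a := by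
    intro Y hY hYP
    have haY : a ∈ mapSet μ (ℓ₁ ×ˢ {Y}) := by
      rw [mapSet_row_eq_mapSet_column hμ hexc hA hX hXA hcol hcd hgA hY hYP]
      exact mem_mapSet.2 ⟨(A, P), ⟨rfl, hP⟩, ha⟩
    obtain ⟨⟨X', _⟩, ⟨hX', rfl⟩, hX'a⟩ := mem_mapSet.1 haY
    obtain rfl : X' = X₁ := by
      by_contra hX'X₁
      exact hμ.apply_column_ne hX' (apply_column_ne_none hexc hX' hX'X₁) hY hP hYP
        (hX'a.trans (apply_exceptional_row_eq hμ hexc hA ha hX' hX'X₁).symm)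
    exact hX'a
  obtain ⟨Y, hY, hYP⟩ := hℓ₂.exists_ne P
  refine mapSet_eq_singleton ?_ ⟨(X₁, Y), ⟨rfl, hY⟩, hcolumn Y hY hYP⟩
  rintro ⟨_, Y'⟩ ⟨rfl, hY'⟩
  by_cases hY'P : Y' = P
  · exact Or.inl (hY'P ▸ hnone)
  · exact Or.inr (hcolumn Y' hY' hY'P)

lemma mapSet_column_inter_mapSet_column_eq
    (hμ : IsLinMap (lineProdLines ℓ₁ ℓ₂) (projLines K W) μ)
    (hexc : {q ∈ ℓ₁ ×ˢ ℓ₂ | μ q = none} = {(X₁, P)}) (hℓ₂ : ℓ₂.Nontrivial) (hA : A ∈ ℓ₁)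
    (hX : X ∈ ℓ₁) (hXX₁ : X ≠ X₁) (ha : μ (A, P) = some a)
    (hcol : mapSet μ ({A} ×ˢ ℓ₂) ≠ mapSet μ ({X} ×ˢ ℓ₂)) :
    mapSet μ ({A} ×ˢ ℓ₂) ∩ mapSet μ ({X} ×ˢ ℓ₂) = {a} := by
  obtain ⟨⟨-, hP⟩, -⟩ : (X₁, P) ∈ {q ∈ ℓ₁ ×ˢ ℓ₂ | μ q = none} := hexc ▸ rfl
  obtain ⟨c, d, hcd, hgA⟩ := hμ.exists_mapSet_column_eq_projLineThrough hℓ₂ hA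
    (apply_column_ne_none hexc hA (ne_exceptional_of_apply_eq_some hexc ha))
  obtain ⟨c', d', hcd', hgX⟩ :=
    hμ.exists_mapSet_column_eq_projLineThrough hℓ₂ hX (apply_column_ne_none hexc hX hXX₁)
  have haA : a ∈ projLineThrough c d := hgA ▸ mem_mapSet.2 ⟨(A, P), ⟨rfl, hP⟩, ha⟩
  have haX : a ∈ projLineThrough c' d' :=
    hgX ▸ mem_mapSet.2 ⟨(X, P), ⟨rfl, hP⟩, apply_exceptional_row_eq hμ hexc hA ha hX hXX₁⟩
  rw [hgA, hgX] at hcol ⊢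
  exact projLineThrough_inter_eq_singleton hcd hcd' hcol haA haX

end OneExceptionalPoint

end Segre

open Segre Set in
theorem statement_4_general (F : Type*) [Field F]
    (V₁ V₂ : Type*) [AddCommGroup V₁] [Module F V₁] [AddCommGroup V₂] [Module F V₂]
    (K W : Type*) [Field K] [AddCommGroup W] [Module K W]
    (ℓ₁ : Set (Projectivization F V₁))
    (ℓ₂ : Set (Projectivization F V₂)) (hℓ₂ : ℓ₂ ∈ projLines F V₂)
    (μ : Projectivization F V₁ × Projectivization F V₂ → Option (Projectivization K W))
    (hμ : IsLinMap (lineProdLines ℓ₁ ℓ₂) (projLines K W) μ)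
    (A : Projectivization F V₁) (hA : A ∈ ℓ₁)
    (hdom : ∀ Y ∈ ℓ₂, μ (A, Y) ≠ none)
    (X₁ : Projectivization F V₁) (P : Projectivization F V₂)
    (hexc : {q ∈ ℓ₁ ×ˢ ℓ₂ | μ q = none} = {(X₁, P)}) :
    ∀ X ∈ ℓ₁, X ≠ A → X ≠ X₁ →
      (mapSet μ (({A} : Set (Projectivization F V₁)) ×ˢ ℓ₂) =
          mapSet μ (({X} : Set (Projectivization F V₁)) ×ˢ ℓ₂) ∧
        mapSet μ (({X₁} : Set (Projectivization F V₁)) ×ˢ ℓ₂) = ptImg μ (A, P)) ∨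
      mapSet μ (({A} : Set (Projectivization F V₁)) ×ˢ ℓ₂) ∩
          mapSet μ (({X} : Set (Projectivization F V₁)) ×ˢ ℓ₂) = ptImg μ (A, P) := by
  intro X hX hXA hXX₁
  obtain ⟨⟨-, hP⟩, -⟩ : (X₁, P) ∈ {q ∈ ℓ₁ ×ˢ ℓ₂ | μ q = none} := hexc ▸ rfl
  obtain ⟨a, ha⟩ := Option.ne_none_iff_exists'.1 (hdom P hP)
  have hℓ₂' := nontrivial_of_mem_projLines hℓ₂
  rw [ptImg_of_eq_some ha]
  by_cases hcol : mapSet μ ({A} ×ˢ ℓ₂) = mapSet μ ({X} ×ˢ ℓ₂)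
  · exact Or.inl ⟨hcol, mapSet_exceptional_column_eq hμ hexc hℓ₂' hA hX hXA ha hcol⟩
  · exact Or.inr (mapSet_column_inter_mapSet_column_eq hμ hexc hℓ₂' hA hX hXX₁ ha hcol)

open Segre Set in
/-- Proposition `slm` (i): the case of exactly one exceptional
point `(X₁, P)`. -/
theorem statement_4 (F : Type*) [Field F]
    (V₁ V₂ : Type*) [AddCommGroup V₁] [Module F V₁] [AddCommGroup V₂] [Module F V₂]
    (K W : Type*) [Field K] [AddCommGroup W] [Module K W]
    (ℓ₁ : Set (Projectivization F V₁)) (hℓ₁ : ℓ₁ ∈ projLines F V₁)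
    (ℓ₂ : Set (Projectivization F V₂)) (hℓ₂ : ℓ₂ ∈ projLines F V₂)
    (μ : Projectivization F V₁ × Projectivization F V₂ → Option (Projectivization K W))
    (hμ : IsLinMap (lineProdLines ℓ₁ ℓ₂) (projLines K W) μ)
    (A : Projectivization F V₁) (hA : A ∈ ℓ₁)
    (hdom : ∀ Y ∈ ℓ₂, μ (A, Y) ≠ none)
    (X₁ : Projectivization F V₁) (P : Projectivization F V₂)
    (hexc : {q ∈ ℓ₁ ×ˢ ℓ₂ | μ q = none} = {(X₁, P)}) :
    ∀ X ∈ ℓ₁, X ≠ A → X ≠ X₁ →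
      (mapSet μ (({A} : Set (Projectivization F V₁)) ×ˢ ℓ₂) =
          mapSet μ (({X} : Set (Projectivization F V₁)) ×ˢ ℓ₂) ∧
        mapSet μ (({X₁} : Set (Projectivization F V₁)) ×ˢ ℓ₂) = ptImg μ (A, P)) ∨
      mapSet μ (({A} : Set (Projectivization F V₁)) ×ˢ ℓ₂) ∩
          mapSet μ (({X} : Set (Projectivization F V₁)) ×ˢ ℓ₂) = ptImg μ (A, P) :=
  statement_4_general F V₁ V₂ K W ℓ₁ ℓ₂ hℓ₂ μ hμ A hA hdom X₁ P hexc
end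

section
/- Let ℓ₁ and ℓ₂ be lines of projective spaces over a commutative field F, let μ: ℓ₁ × ℓ₂ → ℙ' be a linear map of their product into a projective space ℙ', and let A ∈ ℓ₁ be a point such that {A} × ℓ₂ is contained in D(μ). Suppose the exceptional set A(μ) consists of exactly two points (X₁, P) and (X₁', P'). Then X₁ ≠ X₁', P ≠ P', ({X₁'} × ℓ₂)μ = {(A, P)μ}, and (ℓ₁ × ℓ₂)μ = ({A} × ℓ₂)μ. -/
open Set

section Aux
open Segre Set

variable {P Q R : Type*}

lemma aux_sJoin_empty_left (L : Set (Set Q)) (s : Set Q) : sJoin L ∅ s = s := by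
  simp [Segre.sJoin]

lemma aux_ptImg_none {χ : P → Option Q} {e : P} (h : χ e = none) : Segre.ptImg χ e = ∅ := by
  ext y; simp [Segre.ptImg, h]

lemma aux_ptImg_some {χ : P → Option Q} {e : P} {v : Q} (h : χ e = some v) :
    Segre.ptImg χ e = {v} := by
  ext y; simp [Segre.ptImg, h, eq_comm]

lemma aux_mem_mapSet {χ : P → Option Q} {M : Set P} {v : Q} :
    v ∈ Segre.mapSet χ M ↔ ∃ x ∈ M, χ x = some v := by
  simp [Segre.mapSet, Segre.ptImg]

lemma aux_mapSet_mono {χ : P → Option Q} {M N : Set P} (h : M ⊆ N) :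
    Segre.mapSet χ M ⊆ Segre.mapSet χ N := by
  intro v hv
  rw [aux_mem_mapSet] at *
  obtain ⟨x, hx, he⟩ := hv
  exact ⟨x, h hx, he⟩

variable {ℓ₁ : Set P} {ℓ₂ : Set Q} {a : P} {b b' : Q}

lemma aux_line_vert {g : Set (P × Q)} (hg : g ∈ lineProdLines ℓ₁ ℓ₂)
    (h1 : (a, b) ∈ g) (h2 : (a, b') ∈ g) (hbb : b ≠ b') :
    g = {a} ×ˢ ℓ₂ := by
  rcases hg with ⟨X, hX, rfl⟩ | ⟨Y, hY, rfl⟩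
  · obtain rfl : a = X := h1.1
    rfl
  · exact absurd ((h1.2 : b ∈ ({Y} : Set Q)).trans (h2.2 : b' ∈ ({Y} : Set Q)).symm) hbb

lemma aux_lineThru_vert (ha : a ∈ ℓ₁) (hb : b ∈ ℓ₂) (hb' : b' ∈ ℓ₂) (hbb : b ≠ b') :
    lineThru (lineProdLines ℓ₁ ℓ₂) (a, b) (a, b') = {a} ×ˢ ℓ₂ := by
  apply subset_antisymm
  · intro z hz
    simp only [Segre.lineThru, mem_iUnion, mem_setOf_eq] at hz
    obtain ⟨g, ⟨⟨hg, h1, h2⟩, hzg⟩⟩ := hz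
    rwa [aux_line_vert hg h1 h2 hbb] at hzg
  · intro z hz
    simp only [Segre.lineThru, mem_iUnion, mem_setOf_eq]
    exact ⟨{a} ×ˢ ℓ₂, ⟨Or.inl ⟨a, ha, rfl⟩, ⟨rfl, hb⟩, ⟨rfl, hb'⟩⟩, hz⟩

lemma aux_collin_vert (ha : a ∈ ℓ₁) (hb : b ∈ ℓ₂) (hb' : b' ∈ ℓ₂) :
    Collin (lineProdLines ℓ₁ ℓ₂) (a, b) (a, b') :=
  ⟨{a} ×ˢ ℓ₂, Or.inl ⟨a, ha, rfl⟩, ⟨rfl, hb⟩, ⟨rfl, hb'⟩⟩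

lemma aux_sJoin_vert (ha : a ∈ ℓ₁) (hb : b ∈ ℓ₂) (hb' : b' ∈ ℓ₂) (hbb : b ≠ b') :
    sJoin (lineProdLines ℓ₁ ℓ₂) {(a, b)} {(a, b')} = {a} ×ˢ ℓ₂ := by
  apply subset_antisymm
  · refine union_subset (union_subset ?_ ?_) ?_
    · exact singleton_subset_iff.2 ⟨rfl, hb⟩
    · exact singleton_subset_iff.2 ⟨rfl, hb'⟩
    · intro z hz
      simp only [mem_iUnion, mem_singleton_iff] at hz
      obtain ⟨x, rfl, y, rfl, -, hz⟩ := hz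
      rwa [aux_lineThru_vert ha hb hb' hbb] at hz
  · intro z hz
    apply subset_union_right
    simp only [mem_iUnion, mem_singleton_iff]
    refine ⟨_, rfl, _, rfl, ⟨fun h => hbb (congrArg Prod.snd h), aux_collin_vert ha hb hb'⟩, ?_⟩
    rwa [aux_lineThru_vert ha hb hb' hbb]

lemma aux_collapse_vert {L' : Set (Set R)} {μ : P × Q → Option R}
    (hμ : IsLinMap (lineProdLines ℓ₁ ℓ₂) L' μ)
    (ha : a ∈ ℓ₁) (hb : b ∈ ℓ₂) (hb' : b' ∈ ℓ₂) (hbb : b ≠ b')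
    (he : μ (a, b) = none) {v : R} (hz : μ (a, b') = some v) :
    mapSet μ ({a} ×ˢ ℓ₂) = {v} := by
  have h := hμ.1 (a, b) (a, b') (aux_collin_vert ha hb hb')
  rwa [aux_sJoin_vert ha hb hb' hbb, aux_ptImg_none he, aux_ptImg_some hz,
    aux_sJoin_empty_left] at h

lemma aux_total_collapse_vert {L' : Set (Set R)} {μ : P × Q → Option R}
    (hμ : IsLinMap (lineProdLines ℓ₁ ℓ₂) L' μ)
    (ha : a ∈ ℓ₁) (hb : b ∈ ℓ₂) (hb' : b' ∈ ℓ₂) (hbb : b ≠ b')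
    (he : μ (a, b) = none) (he' : μ (a, b') = none) :
    ∀ y ∈ ℓ₂, μ (a, y) = none := by
  have h := hμ.1 (a, b) (a, b') (aux_collin_vert ha hb hb')
  rw [aux_sJoin_vert ha hb hb' hbb, aux_ptImg_none he, aux_ptImg_none he',
    aux_sJoin_empty_left] at h
  intro y hy
  cases hv : μ (a, y) with
  | none => rfl
  | some v =>
    exact absurd (h ▸ aux_mem_mapSet.2 ⟨(a, y), ⟨rfl, hy⟩, hv⟩) (notMem_empty v)

end Aux

section Aux2
open Segre Set

variable {P Q R : Type*} {ℓ₁ : Set P} {ℓ₂ : Set Q} {a a' : P} {b : Q}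

lemma aux_line_horiz {g : Set (P × Q)} (hg : g ∈ lineProdLines ℓ₁ ℓ₂)
    (h1 : (a, b) ∈ g) (h2 : (a', b) ∈ g) (haa : a ≠ a') :
    g = ℓ₁ ×ˢ {b} := by
  rcases hg with ⟨X, hX, rfl⟩ | ⟨Y, hY, rfl⟩
  · exact absurd ((h1.1 : a ∈ ({X} : Set P)).trans (h2.1 : a' ∈ ({X} : Set P)).symm) haa
  · obtain rfl : b = Y := h1.2
    rfl

lemma aux_lineThru_horiz (hb : b ∈ ℓ₂) (ha : a ∈ ℓ₁) (ha' : a' ∈ ℓ₁) (haa : a ≠ a') :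
    lineThru (lineProdLines ℓ₁ ℓ₂) (a, b) (a', b) = ℓ₁ ×ˢ {b} := by
  apply subset_antisymm
  · intro z hz
    simp only [Segre.lineThru, mem_iUnion, mem_setOf_eq] at hz
    obtain ⟨g, ⟨⟨hg, h1, h2⟩, hzg⟩⟩ := hz
    rwa [aux_line_horiz hg h1 h2 haa] at hzg
  · intro z hz
    simp only [Segre.lineThru, mem_iUnion, mem_setOf_eq]
    exact ⟨ℓ₁ ×ˢ {b}, ⟨Or.inr ⟨b, hb, rfl⟩, ⟨ha, rfl⟩, ⟨ha', rfl⟩⟩, hz⟩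

lemma aux_collin_horiz (hb : b ∈ ℓ₂) (ha : a ∈ ℓ₁) (ha' : a' ∈ ℓ₁) :
    Collin (lineProdLines ℓ₁ ℓ₂) (a, b) (a', b) :=
  ⟨ℓ₁ ×ˢ {b}, Or.inr ⟨b, hb, rfl⟩, ⟨ha, rfl⟩, ⟨ha', rfl⟩⟩

lemma aux_sJoin_horiz (hb : b ∈ ℓ₂) (ha : a ∈ ℓ₁) (ha' : a' ∈ ℓ₁) (haa : a ≠ a') :
    sJoin (lineProdLines ℓ₁ ℓ₂) {(a, b)} {(a', b)} = ℓ₁ ×ˢ {b} := by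
  apply subset_antisymm
  · refine union_subset (union_subset ?_ ?_) ?_
    · exact singleton_subset_iff.2 ⟨ha, rfl⟩
    · exact singleton_subset_iff.2 ⟨ha', rfl⟩
    · intro z hz
      simp only [mem_iUnion, mem_singleton_iff] at hz
      obtain ⟨x, rfl, y, rfl, -, hz⟩ := hz
      rwa [aux_lineThru_horiz hb ha ha' haa] at hz
  · intro z hz
    apply subset_union_right
    simp only [mem_iUnion, mem_singleton_iff]
    refine ⟨_, rfl, _, rfl, ⟨fun h => haa (congrArg Prod.fst h), aux_collin_horiz hb ha ha'⟩, ?_⟩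
    rwa [aux_lineThru_horiz hb ha ha' haa]

lemma aux_collapse_horiz {L' : Set (Set R)} {μ : P × Q → Option R}
    (hμ : IsLinMap (lineProdLines ℓ₁ ℓ₂) L' μ)
    (hb : b ∈ ℓ₂) (ha : a ∈ ℓ₁) (ha' : a' ∈ ℓ₁) (haa : a ≠ a')
    (he : μ (a, b) = none) {v : R} (hz : μ (a', b) = some v) :
    mapSet μ (ℓ₁ ×ˢ {b}) = {v} := by
  have h := hμ.1 (a, b) (a', b) (aux_collin_horiz hb ha ha')
  rwa [aux_sJoin_horiz hb ha ha' haa, aux_ptImg_none he, aux_ptImg_some hz,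
    aux_sJoin_empty_left] at h

lemma aux_total_collapse_horiz {L' : Set (Set R)} {μ : P × Q → Option R}
    (hμ : IsLinMap (lineProdLines ℓ₁ ℓ₂) L' μ)
    (hb : b ∈ ℓ₂) (ha : a ∈ ℓ₁) (ha' : a' ∈ ℓ₁) (haa : a ≠ a')
    (he : μ (a, b) = none) (he' : μ (a', b) = none) :
    ∀ x ∈ ℓ₁, μ (x, b) = none := by
  have h := hμ.1 (a, b) (a', b) (aux_collin_horiz hb ha ha')
  rw [aux_sJoin_horiz hb ha ha' haa, aux_ptImg_none he, aux_ptImg_none he',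
    aux_sJoin_empty_left] at h
  intro x hx
  cases hv : μ (x, b) with
  | none => rfl
  | some v =>
    exact absurd (h ▸ aux_mem_mapSet.2 ⟨(x, b), ⟨hx, rfl⟩, hv⟩) (notMem_empty v)

lemma aux_third_point {K V : Type*} [Field K] [AddCommGroup V] [Module K V]
    {ℓ : Set (Projectivization K V)} (hℓ : ℓ ∈ Segre.projLines K V)
    (S T : Projectivization K V) : ∃ z ∈ ℓ, z ≠ S ∧ z ≠ T := by
  obtain ⟨x, y, hxy, rfl⟩ := hℓ
  set u := x.rep with hu_def
  set w := y.rep with hw_def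
  have hu : u ≠ 0 := x.rep_nonzero
  have hw : w ≠ 0 := y.rep_nonzero
  have hxmk : Projectivization.mk K u hu = x := x.mk_rep
  have hymk : Projectivization.mk K w hw = y := y.mk_rep
  have hw_not : ∀ c : K, c • u ≠ w := by
    intro c hc
    apply hxy
    rw [← hxmk, ← hymk]
    exact ((Projectivization.mk_eq_mk_iff' K w u hw hu).2 ⟨c, hc⟩).symm
  have hne0 : u + w ≠ 0 := by
    intro h
    exact hw_not (-1) (by rw [neg_one_smul]; exact neg_eq_of_add_eq_zero_right h)
  set z := Projectivization.mk K (u + w) hne0 with hz_def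
  have hzx : z ≠ x := by
    intro h
    rw [← hxmk] at h
    obtain ⟨c, hc⟩ := (Projectivization.mk_eq_mk_iff' K (u + w) u hne0 hu).1 h
    exact hw_not (c - 1) (by rw [sub_smul, one_smul, hc]; abel)
  have hzy : z ≠ y := by
    intro h
    rw [← hymk] at h
    obtain ⟨c, hc⟩ := (Projectivization.mk_eq_mk_iff' K (u + w) w hne0 hw).1 h
    have hu_eq : u = (c - 1) • w := by rw [sub_smul, one_smul, hc]; abel
    have hc1 : c - 1 ≠ 0 := by
      intro h0
      rw [h0, zero_smul] at hu_eq
      exact hu hu_eq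
    exact hw_not (c - 1)⁻¹ (by rw [hu_eq, smul_smul, inv_mul_cancel₀ hc1, one_smul])
  have hmemx : x ∈ Segre.projLineThrough x y :=
    le_sup_left (α := Submodule K V) (a := x.submodule) (b := y.submodule)
  have hmemy : y ∈ Segre.projLineThrough x y :=
    le_sup_right (α := Submodule K V) (a := x.submodule) (b := y.submodule)
  have hmemz : z ∈ Segre.projLineThrough x y := by
    show z.submodule ≤ x.submodule ⊔ y.submodule
    rw [hz_def, Projectivization.submodule_mk, x.submodule_eq, y.submodule_eq]
    rw [Submodule.span_singleton_le_iff_mem]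
    exact Submodule.add_mem _
      (Submodule.mem_sup_left (Submodule.mem_span_singleton_self u))
      (Submodule.mem_sup_right (Submodule.mem_span_singleton_self w))
  rcases eq_or_ne x S with rfl | hxS
  · rcases eq_or_ne y T with rfl | hyT
    · exact ⟨z, hmemz, hzx, hzy⟩
    · exact ⟨y, hmemy, Ne.symm hxy, hyT⟩
  · rcases eq_or_ne x T with rfl | hxT
    · rcases eq_or_ne y S with rfl | hyS
      · exact ⟨z, hmemz, hzy, hzx⟩
      · exact ⟨y, hmemy, hyS, Ne.symm hxy⟩
    · exact ⟨x, hmemx, hxS, hxT⟩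
end Aux2

open Segre Set in
/-- Proposition `slm` (ii): the case of exactly two exceptional
points `(X₁, P)` and `(X₁', P')`. -/
theorem statement_5 (F : Type*) [Field F]
    (V₁ V₂ : Type*) [AddCommGroup V₁] [Module F V₁] [AddCommGroup V₂] [Module F V₂]
    (K W : Type*) [Field K] [AddCommGroup W] [Module K W]
    (ℓ₁ : Set (Projectivization F V₁)) (hℓ₁ : ℓ₁ ∈ projLines F V₁)
    (ℓ₂ : Set (Projectivization F V₂)) (hℓ₂ : ℓ₂ ∈ projLines F V₂)
    (μ : Projectivization F V₁ × Projectivization F V₂ → Option (Projectivization K W))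
    (hμ : IsLinMap (lineProdLines ℓ₁ ℓ₂) (projLines K W) μ)
    (A : Projectivization F V₁) (hA : A ∈ ℓ₁)
    (hdom : ∀ Y ∈ ℓ₂, μ (A, Y) ≠ none)
    (X₁ X₁' : Projectivization F V₁) (P P' : Projectivization F V₂)
    (hne : (X₁, P) ≠ (X₁', P'))
    (hexc : {q ∈ ℓ₁ ×ˢ ℓ₂ | μ q = none} = {(X₁, P), (X₁', P')}) :
    X₁ ≠ X₁' ∧ P ≠ P' ∧
    mapSet μ (({X₁'} : Set (Projectivization F V₁)) ×ˢ ℓ₂) = ptImg μ (A, P) ∧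
    mapSet μ (ℓ₁ ×ˢ ℓ₂) = mapSet μ (({A} : Set (Projectivization F V₁)) ×ˢ ℓ₂) := by
  have hmem1 : ((X₁, P) : _ × _) ∈ {q ∈ ℓ₁ ×ˢ ℓ₂ | μ q = none} := by
    rw [hexc]; exact mem_insert _ _
  have hmem2 : ((X₁', P') : _ × _) ∈ {q ∈ ℓ₁ ×ˢ ℓ₂ | μ q = none} := by
    rw [hexc]; exact mem_insert_of_mem _ rfl
  obtain ⟨⟨hX₁ℓ, hPℓ⟩, hμ₁⟩ := hmem1
  obtain ⟨⟨hX₁'ℓ, hP'ℓ⟩, hμ₂⟩ := hmem2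
  have hnone : ∀ x ∈ ℓ₁, ∀ y ∈ ℓ₂, μ (x, y) = none →
      (x, y) = (X₁, P) ∨ (x, y) = (X₁', P') := by
    intro x hx y hy h
    have hm : (x, y) ∈ {q ∈ ℓ₁ ×ˢ ℓ₂ | μ q = none} := ⟨⟨hx, hy⟩, h⟩
    rw [hexc] at hm
    simpa using hm
  have hAX₁ : A ≠ X₁ := by rintro rfl; exact hdom P hPℓ hμ₁
  have hAX₁' : A ≠ X₁' := by rintro rfl; exact hdom P' hP'ℓ hμ₂
  have hXX : X₁ ≠ X₁' := by
    rintro rfl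
    have hPP : P ≠ P' := fun h => hne (by rw [h])
    have hall := aux_total_collapse_vert hμ hX₁ℓ hPℓ hP'ℓ hPP hμ₁ hμ₂
    obtain ⟨Y₀, hY₀ℓ, hY₀P, hY₀P'⟩ := aux_third_point hℓ₂ P P'
    rcases hnone X₁ hX₁ℓ Y₀ hY₀ℓ (hall Y₀ hY₀ℓ) with h | h
    · exact hY₀P (congrArg Prod.snd h)
    · exact hY₀P' (congrArg Prod.snd h)
  have hPP : P ≠ P' := by
    rintro rfl
    have hall := aux_total_collapse_horiz hμ hPℓ hX₁ℓ hX₁'ℓ hXX hμ₁ hμ₂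
    exact hdom P hPℓ (hall A hA)
  obtain ⟨q, hq⟩ : ∃ q, μ (A, P) = some q := Option.ne_none_iff_exists'.1 (hdom P hPℓ)
  obtain ⟨q', hq'⟩ : ∃ q', μ (A, P') = some q' := Option.ne_none_iff_exists'.1 (hdom P' hP'ℓ)
  have hcolP : mapSet μ (ℓ₁ ×ˢ {P}) = {q} :=
    aux_collapse_horiz hμ hPℓ hX₁ℓ hA (Ne.symm hAX₁) hμ₁ hq
  have hcolP' : mapSet μ (ℓ₁ ×ˢ {P'}) = {q'} :=
    aux_collapse_horiz hμ hP'ℓ hX₁'ℓ hA (Ne.symm hAX₁') hμ₂ hq'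
  have hvalP : ∀ x ∈ ℓ₁, x ≠ X₁ → μ (x, P) = some q := by
    intro x hx hxX₁
    cases hv : μ (x, P) with
    | none =>
      rcases hnone x hx P hPℓ hv with h | h
      · exact absurd (congrArg Prod.fst h) hxX₁
      · exact absurd (congrArg Prod.snd h) hPP
    | some v =>
      have hvm : v ∈ mapSet μ (ℓ₁ ×ˢ {P}) := aux_mem_mapSet.2 ⟨(x, P), ⟨hx, rfl⟩, hv⟩
      rw [hcolP, mem_singleton_iff] at hvm
      rw [hvm]
  have hvalP' : ∀ x ∈ ℓ₁, x ≠ X₁' → μ (x, P') = some q' := by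
    intro x hx hxX₁'
    cases hv : μ (x, P') with
    | none =>
      rcases hnone x hx P' hP'ℓ hv with h | h
      · exact absurd (congrArg Prod.snd h) hPP.symm
      · exact absurd (congrArg Prod.fst h) hxX₁'
    | some v =>
      have hvm : v ∈ mapSet μ (ℓ₁ ×ˢ {P'}) := aux_mem_mapSet.2 ⟨(x, P'), ⟨hx, rfl⟩, hv⟩
      rw [hcolP', mem_singleton_iff] at hvm
      rw [hvm]
  have hq3 : mapSet μ (({X₁'} : Set (Projectivization F V₁)) ×ˢ ℓ₂) = {q} :=
    aux_collapse_vert hμ hX₁'ℓ hP'ℓ hPℓ (Ne.symm hPP) hμ₂ (hvalP X₁' hX₁'ℓ (Ne.symm hXX))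
  have hq4 : mapSet μ (({X₁} : Set (Projectivization F V₁)) ×ˢ ℓ₂) = {q'} :=
    aux_collapse_vert hμ hX₁ℓ hPℓ hP'ℓ hPP hμ₁ (hvalP' X₁ hX₁ℓ hXX)
  have hAjoin : mapSet μ (({A} : Set (Projectivization F V₁)) ×ˢ ℓ₂) =
      sJoin (projLines K W) {q} {q'} := by
    have h := hμ.1 (A, P) (A, P') (aux_collin_vert hA hPℓ hP'ℓ)
    rwa [aux_sJoin_vert hA hPℓ hP'ℓ hPP, aux_ptImg_some hq, aux_ptImg_some hq'] at h
  refine ⟨hXX, hPP, hq3.trans (aux_ptImg_some hq).symm,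
    subset_antisymm ?_ (aux_mapSet_mono (prod_mono (singleton_subset_iff.2 hA) subset_rfl))⟩
  intro v hv
  rw [aux_mem_mapSet] at hv
  obtain ⟨⟨x, y⟩, ⟨hx, hy⟩, hv⟩ := hv
  have hxy_mem : v ∈ mapSet μ (({x} : Set (Projectivization F V₁)) ×ˢ ℓ₂) :=
    aux_mem_mapSet.2 ⟨(x, y), ⟨rfl, hy⟩, hv⟩
  rcases eq_or_ne x A with rfl | hxA
  · exact hxy_mem
  rcases eq_or_ne x X₁ with rfl | hxX₁
  · rw [hq4, mem_singleton_iff] at hxy_mem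
    exact aux_mem_mapSet.2 ⟨(A, P'), ⟨rfl, hP'ℓ⟩, hxy_mem ▸ hq'⟩
  rcases eq_or_ne x X₁' with rfl | hxX₁'
  · rw [hq3, mem_singleton_iff] at hxy_mem
    exact aux_mem_mapSet.2 ⟨(A, P), ⟨rfl, hPℓ⟩, hxy_mem ▸ hq⟩
  · have hXjoin : mapSet μ (({x} : Set (Projectivization F V₁)) ×ˢ ℓ₂) =
        sJoin (projLines K W) {q} {q'} := by
      have h := hμ.1 (x, P) (x, P') (aux_collin_vert hx hPℓ hP'ℓ)
      rwa [aux_sJoin_vert hx hPℓ hP'ℓ hPP, aux_ptImg_some (hvalP x hx hxX₁),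
        aux_ptImg_some (hvalP' x hx hxX₁')] at h
    rw [hXjoin, ← hAjoin] at hxy_mem
    exact hxy_mem
end

section
/- Let γ: ℙ₁ × ℙ₂ → ℙ̄ be a regular embedding, χ: ℙ₁ × ℙ₂ → ℙ' a linear map, g ∈ 𝒢₁, and P₁*, P₂* distinct points of 𝒫₂. Set g_i := (g × {P_i*})γ and h_i := (g × {P_i*})χ for i = 1, 2. Assume g × {P₁*} and g × {P₂*} are contained in D(χ), and that h₁ and h₂ are lines of ℙ'. Then the mapping σ': h₁ → h₂ given by (P, P₁*)χ ↦ (P, P₂*)χ for P ∈ g is a well-defined bijection, and the mapping σ: g₁ → g₂ obtained by composing (γ⁻¹χ) restricted to g₁ (a bijection g₁ → h₁), then σ', then the inverse of (γ⁻¹χ) restricted to g₂ (a bijection g₂ → h₂), is a projectivity. -/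
open Set

namespace Segre

variable {P Q : Type*}

section Aux

open Module Projectivization

variable {K V : Type*} [Field K] [AddCommGroup V] [Module K V]

lemma span_eq_of_rank_one {W : Submodule K V} [FiniteDimensional K W]
    (hW : finrank K W = 1) {p : V} (hp : p ∈ W) (h0 : p ≠ 0) : (K ∙ p) = W := by
  refine Submodule.eq_of_le_of_finrank_le
    ((Submodule.span_singleton_le_iff_mem p W).2 hp) ?_
  rw [hW, finrank_span_singleton h0]

lemma rep_mem_of_le {x : Projectivization K V} {S : Submodule K V}
    (h : x.submodule ≤ S) : x.rep ∈ S := by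
  apply h
  rw [Projectivization.submodule_eq]
  exact Submodule.mem_span_singleton_self _

lemma span_rep_le_iff {x : Projectivization K V} {S : Submodule K V} :
    x.submodule ≤ S ↔ x.rep ∈ S := by
  rw [Projectivization.submodule_eq, Submodule.span_singleton_le_iff_mem]

lemma point_inf_eq_bot {x y : Projectivization K V} (h : x ≠ y) :
    x.submodule ⊓ y.submodule = ⊥ := by
  by_contra hne
  obtain ⟨v, hv, hv0⟩ := Submodule.exists_mem_ne_zero_of_ne_bot hne
  have h1 : (K ∙ v) = x.submodule :=
    span_eq_of_rank_one x.finrank_submodule (hv.1 : _) hv0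
  have h2 : (K ∙ v) = y.submodule :=
    span_eq_of_rank_one y.finrank_submodule (hv.2 : _) hv0
  exact h (Projectivization.submodule_injective (h1 ▸ h2))

lemma finrank_sup_points {x y : Projectivization K V} (h : x ≠ y) :
    finrank K ↥(x.submodule ⊔ y.submodule) = 2 := by
  have := Submodule.finrank_sup_add_finrank_inf_eq x.submodule y.submodule
  rw [point_inf_eq_bot h, x.finrank_submodule, y.finrank_submodule, finrank_bot] at this
  omega

lemma mem_projLineThrough_left (x y : Projectivization K V) :
    x ∈ projLineThrough x y := show x.submodule ≤ _ from le_sup_left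

lemma mem_projLineThrough_right (x y : Projectivization K V) :
    y ∈ projLineThrough x y := show y.submodule ≤ _ from le_sup_right

lemma projLineThrough_mem {x y : Projectivization K V} (h : x ≠ y) :
    projLineThrough x y ∈ projLines K V := ⟨x, y, h, rfl⟩

lemma line_unique {g : Set (Projectivization K V)} (hg : g ∈ projLines K V)
    {x y : Projectivization K V} (hx : x ∈ g) (hy : y ∈ g) (hxy : x ≠ y) :
    g = projLineThrough x y := by
  obtain ⟨a, b, hab, rfl⟩ := hg
  have hsub : x.submodule ⊔ y.submodule ≤ a.submodule ⊔ b.submodule := sup_le hx hy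
  have heq : x.submodule ⊔ y.submodule = a.submodule ⊔ b.submodule :=
    Submodule.eq_of_le_of_finrank_le hsub
      (by rw [finrank_sup_points hab, finrank_sup_points hxy])
  ext z
  show z.submodule ≤ _ ↔ z.submodule ≤ _
  rw [heq]

lemma lineThru_proj {x y : Projectivization K V} (h : x ≠ y) :
    lineThru (projLines K V) x y = projLineThrough x y := by
  apply subset_antisymm
  · intro z hz
    simp only [lineThru, mem_iUnion, exists_prop] at hz
    obtain ⟨s, ⟨hs, hxs, hys⟩, hzs⟩ := hz
    rwa [line_unique hs hxs hys h] at hzs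
  · intro z hz
    exact mem_biUnion ⟨projLineThrough_mem h, mem_projLineThrough_left x y,
      mem_projLineThrough_right x y⟩ hz

lemma spanOf_projLineThrough (x y : Projectivization K V) :
    spanOf (projLineThrough x y) = x.submodule ⊔ y.submodule := by
  apply le_antisymm
  · exact iSup₂_le fun z hz => hz
  · exact sup_le
      (le_iSup₂_of_le x (mem_projLineThrough_left x y) le_rfl)
      (le_iSup₂_of_le y (mem_projLineThrough_right x y) le_rfl)

lemma sJoin_singleton {L : Set (Set P)} {X Y : P} (hC : Collin L X Y) (hXY : X ≠ Y) :
    sJoin L {X} {Y} = lineThru L X Y := by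
  obtain ⟨s, hs, hXs, hYs⟩ := hC
  have hXl : X ∈ lineThru L X Y := mem_biUnion ⟨hs, hXs, hYs⟩ hXs
  have hYl : Y ∈ lineThru L X Y := mem_biUnion ⟨hs, hXs, hYs⟩ hYs
  apply subset_antisymm
  · rintro z (hz | hz)
    · rcases hz with hz | hz
      · rw [mem_singleton_iff.1 hz]; exact hXl
      · rw [mem_singleton_iff.1 hz]; exact hYl
    · simp only [mem_iUnion, mem_singleton_iff, exists_prop] at hz
      obtain ⟨x, rfl, y, rfl, _, hzl⟩ := hz
      exact hzl
  · intro z hz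
    apply mem_union_right
    simp only [mem_iUnion, mem_singleton_iff, exists_prop]
    exact ⟨X, rfl, Y, rfl, ⟨hXY, ⟨s, hs, hXs, hYs⟩⟩, hz⟩

lemma mapSet_total {γ : P → Q} (M : Set P) :
    mapSet (fun p => some (γ p)) M = γ '' M := by
  ext y
  simp only [mapSet, ptImg, mem_iUnion, mem_setOf_eq, Option.some_inj, mem_image,
    exists_prop]

lemma ptImg_total (γ : P → Q) (X : P) :
    ptImg (fun p => some (γ p)) X = {γ X} := by
  ext y; simp [ptImg, eq_comm]

lemma image_lineThru {P' : Type*} {L : Set (Set P')} {γ : P' → Projectivization K V}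
    (hL1 : ∀ X Y : P', Collin L X Y →
      mapSet (fun p => some (γ p)) (sJoin L {X} {Y})
        = sJoin (projLines K V) (ptImg (fun p => some (γ p)) X)
            (ptImg (fun p => some (γ p)) Y))
    {X Y : P'} (hC : Collin L X Y) (hXY : X ≠ Y) (hγ : γ X ≠ γ Y) :
    γ '' (lineThru L X Y) = projLineThrough (γ X) (γ Y) := by
  have h := hL1 X Y hC
  rw [sJoin_singleton hC hXY, mapSet_total, ptImg_total, ptImg_total] at h
  rw [h, sJoin_singleton ⟨projLineThrough (γ X) (γ Y), projLineThrough_mem hγ,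
    mem_projLineThrough_left _ _, mem_projLineThrough_right _ _⟩ hγ, lineThru_proj hγ]

variable {K₂ V₂ : Type*} [Field K₂] [AddCommGroup V₂] [Module K₂ V₂]

lemma collin_horiz {g : Set (Projectivization K V)} (hg : g ∈ projLines K V)
    {x y : Projectivization K V} (hx : x ∈ g) (hy : y ∈ g) (Z : Projectivization K₂ V₂) :
    Collin (prodLines (projLines K V) (projLines K₂ V₂)) (x, Z) (y, Z) :=
  ⟨g ×ˢ {Z}, Or.inr ⟨g, hg, Z, rfl⟩, ⟨hx, rfl⟩, ⟨hy, rfl⟩⟩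

lemma collin_vert (X : Projectivization K V) {ℓ : Set (Projectivization K₂ V₂)}
    (hℓ : ℓ ∈ projLines K₂ V₂) {y z : Projectivization K₂ V₂}
    (hy : y ∈ ℓ) (hz : z ∈ ℓ) :
    Collin (prodLines (projLines K V) (projLines K₂ V₂)) (X, y) (X, z) :=
  ⟨{X} ×ˢ ℓ, Or.inl ⟨X, ℓ, hℓ, rfl⟩, ⟨rfl, hy⟩, ⟨rfl, hz⟩⟩

lemma lineThru_prod_horiz {g : Set (Projectivization K V)} (hg : g ∈ projLines K V)
    {x y : Projectivization K V} (hx : x ∈ g) (hy : y ∈ g) (hxy : x ≠ y)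
    (Z : Projectivization K₂ V₂) :
    lineThru (prodLines (projLines K V) (projLines K₂ V₂)) (x, Z) (y, Z)
      = g ×ˢ {Z} := by
  apply subset_antisymm
  · intro z hz
    simp only [lineThru, mem_iUnion, exists_prop] at hz
    obtain ⟨s, ⟨hs, h1, h2⟩, hzs⟩ := hz
    rcases hs with ⟨X₁, g₂, _, rfl⟩ | ⟨g₁, hg₁, X₂, rfl⟩
    · exact absurd ((mem_singleton_iff.1 h1.1).trans (mem_singleton_iff.1 h2.1).symm) hxy
    · have hX₂ : X₂ = Z := (mem_singleton_iff.1 h1.2).symm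
      have hgline : g₁ = g := by
        rw [line_unique hg₁ h1.1 h2.1 hxy, ← line_unique hg hx hy hxy]
      rw [hgline, hX₂] at hzs
      exact hzs
  · intro z hz
    exact mem_biUnion ⟨Or.inr ⟨g, hg, Z, rfl⟩, ⟨hx, rfl⟩, ⟨hy, rfl⟩⟩ hz

lemma lineThru_prod_vert (X : Projectivization K V)
    {ℓ : Set (Projectivization K₂ V₂)} (hℓ : ℓ ∈ projLines K₂ V₂)
    {y z : Projectivization K₂ V₂} (hy : y ∈ ℓ) (hz : z ∈ ℓ) (hyz : y ≠ z) :
    lineThru (prodLines (projLines K V) (projLines K₂ V₂)) (X, y) (X, z)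
      = {X} ×ˢ ℓ := by
  apply subset_antisymm
  · intro w hw
    simp only [lineThru, mem_iUnion, exists_prop] at hw
    obtain ⟨s, ⟨hs, h1, h2⟩, hws⟩ := hw
    rcases hs with ⟨X₁, g₂, hg₂, rfl⟩ | ⟨g₁, _, X₂, rfl⟩
    · have hX₁ : X₁ = X := (mem_singleton_iff.1 h1.1).symm
      have hgline : g₂ = ℓ := by
        rw [line_unique hg₂ h1.2 h2.2 hyz, ← line_unique hℓ hy hz hyz]
      rw [hX₁, hgline] at hws
      exact hws
    · exact absurd ((mem_singleton_iff.1 h1.2).trans (mem_singleton_iff.1 h2.2).symm) hyz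
  · intro w hw
    exact mem_biUnion ⟨Or.inl ⟨X, ℓ, hℓ, rfl⟩, ⟨rfl, hy⟩, ⟨rfl, hz⟩⟩ hw

lemma decomp_eq {W₁ W₂ : Submodule K V} (h : W₁ ⊓ W₂ = ⊥)
    {r r' s s' : V} (hr : r ∈ W₁) (hr' : r' ∈ W₁) (hs : s ∈ W₂) (hs' : s' ∈ W₂)
    (heq : r + s = r' + s') : r = r' ∧ s = s' := by
  have hmem : r - r' ∈ W₁ ⊓ W₂ := by
    refine ⟨sub_mem hr hr', ?_⟩
    have : r - r' = s' - s := by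
      rw [sub_eq_sub_iff_add_eq_add, heq, add_comm]
    rw [this]
    exact sub_mem hs' hs
  rw [h, Submodule.mem_bot] at hmem
  have h1 : r = r' := sub_eq_zero.1 hmem
  refine ⟨h1, ?_⟩
  have := heq
  rw [h1] at this
  exact add_left_cancel this

lemma exists_pair_linearMap [FiniteDimensional K V]
    {p p' : V} (h : LinearIndependent K ![p, p']) (q q' : V) :
    ∃ T : V →ₗ[K] V, T p = q ∧ T p' = q' := by
  set Wsp := Submodule.span K (Set.range ![p, p']) with hWsp
  obtain ⟨W', hW'⟩ := Wsp.exists_isCompl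
  set b := Basis.span h with hb
  set f := b.constr K ![q, q'] with hf
  set π := Wsp.linearProjOfIsCompl W' hW' with hπ
  refine ⟨f.comp π, ?_, ?_⟩
  · have hpW : p ∈ Wsp := Submodule.subset_span ⟨0, rfl⟩
    have hproj : π p = ⟨p, hpW⟩ :=
      Submodule.linearProjOfIsCompl_apply_left hW' ⟨p, hpW⟩
    have hb0 : (⟨p, hpW⟩ : Wsp) = b 0 := Subtype.ext (by rw [hb, Basis.span_apply]; rfl)
    simp only [LinearMap.comp_apply, hproj, hb0, hf, Basis.constr_basis]
    rfl
  · have hpW : p' ∈ Wsp := Submodule.subset_span ⟨1, rfl⟩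
    have hproj : π p' = ⟨p', hpW⟩ :=
      Submodule.linearProjOfIsCompl_apply_left hW' ⟨p', hpW⟩
    have hb1 : (⟨p', hpW⟩ : Wsp) = b 1 := Subtype.ext (by rw [hb, Basis.span_apply]; rfl)
    simp only [LinearMap.comp_apply, hproj, hb1, hf, Basis.constr_basis]
    rfl

end Aux

end Segre

open Segre Set in
/-- Proposition `perv4`: if `h₁ = (g × {P₁*})χ` and `h₂ = (g × {P₂*})χ`
are lines, then `σ' : h₁ → h₂, (P, P₁*)χ ↦ (P, P₂*)χ` is a well-defined bijection (in
particular `γ⁻¹χ` restricted to `g₁` resp. `g₂` is a bijection onto `h₁` resp. `h₂`),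
and `σ = ((γ⁻¹χ)|g₁) σ' ((γ⁻¹χ)|g₂)⁻¹ : g₁ → g₂`, i.e. `(P, P₁*)γ ↦ (P, P₂*)γ`,
is a projectivity. -/
theorem statement_8 (F : Type*) [Field F] (n m : ℕ) (hn : 2 ≤ n) (hm : 1 ≤ m)
    (K W : Type*) [Field K] [AddCommGroup W] [Module K W]
    (γ : PGPt F n × PGPt F m → PGPt F (n * m + n + m))
    (hγ : IsRegularEmbedding F n m γ)
    (χ : PGPt F n × PGPt F m → Option (Projectivization K W))
    (hχ : IsLinMap (prodLines (PGLines F n) (PGLines F m)) (projLines K W) χ)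
    (g : Set (PGPt F n)) (hg : g ∈ PGLines F n)
    (P₁ P₂ : PGPt F m) (hP : P₁ ≠ P₂)
    (hdom : ∀ P ∈ g, χ (P, P₁) ≠ none ∧ χ (P, P₂) ≠ none)
    (hh₁ : mapSet χ (g ×ˢ ({P₁} : Set (PGPt F m))) ∈ projLines K W)
    (hh₂ : mapSet χ (g ×ˢ ({P₂} : Set (PGPt F m))) ∈ projLines K W) :
    (∀ P ∈ g, ∀ Q ∈ g, (χ (P, P₁) = χ (Q, P₁) ↔ χ (P, P₂) = χ (Q, P₂))) ∧
    (∀ P ∈ g, ∀ Q ∈ g, χ (P, P₁) = χ (Q, P₁) → P = Q) ∧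
    (∀ P ∈ g, ∀ Q ∈ g, χ (P, P₂) = χ (Q, P₂) → P = Q) ∧
    ∃ T : (Fin (n * m + n + m + 1) → F) →ₗ[F] (Fin (n * m + n + m + 1) → F),
      Submodule.map T (spanOf (γ '' (g ×ˢ ({P₁} : Set (PGPt F m)))))
        = spanOf (γ '' (g ×ˢ ({P₂} : Set (PGPt F m)))) ∧
      ∀ P ∈ g, Submodule.map T ((γ (P, P₁)).submodule) = (γ (P, P₂)).submodule := by
  classical
  obtain ⟨hL1γ, hinj, _⟩ := hγ
  have inj12 : ∀ (Y : PGPt F m), (∀ R ∈ g, χ (R, Y) ≠ none) →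
      ∀ P ∈ g, ∀ Q ∈ g, χ (P, Y) = χ (Q, Y) → P = Q := by
    intro Y hd Pp hPp Qq hQq heq
    by_contra hne
    obtain ⟨Z, hZ, hZnone⟩ := hχ.2 (Pp, Y) (Qq, Y)
      (collin_horiz hg hPp hQq Y)
      (by simp [Prod.mk.injEq, hne])
      (by simp only [ptImg, heq])
    rw [lineThru_prod_horiz hg hPp hQq hne Y] at hZ
    obtain ⟨hZ1, hZ2⟩ := hZ
    rw [mem_singleton_iff] at hZ2
    apply hd Z.1 hZ1
    have hZeq : (Z.1, Y) = Z := by rw [← hZ2]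
    rw [hZeq]
    exact hZnone
  refine ⟨fun Pp hPp Qq hQq =>
      ⟨fun h => by rw [inj12 P₁ (fun R hR => (hdom R hR).1) Pp hPp Qq hQq h],
       fun h => by rw [inj12 P₂ (fun R hR => (hdom R hR).2) Pp hPp Qq hQq h]⟩,
    inj12 P₁ (fun R hR => (hdom R hR).1), inj12 P₂ (fun R hR => (hdom R hR).2), ?_⟩
  -- Part 4: the projectivity
  obtain ⟨A, B, hAB, hgeq⟩ := id hg
  have hA : A ∈ g := by rw [hgeq]; exact mem_projLineThrough_left A B
  have hB : B ∈ g := by rw [hgeq]; exact mem_projLineThrough_right A B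
  -- a third point on the line P₁P₂
  have hP12sub : P₁.submodule ≠ P₂.submodule :=
    fun h => hP (Projectivization.submodule_injective h)
  have huv : P₁.rep + P₂.rep ≠ 0 := by
    intro h0
    apply hP
    rw [← P₁.mk_rep, ← P₂.mk_rep, Projectivization.mk_eq_mk_iff']
    exact ⟨-1, by rw [neg_one_smul]; exact neg_eq_of_add_eq_zero_left h0⟩
  set P₃ : PGPt F m := Projectivization.mk F (P₁.rep + P₂.rep) huv with hP₃def
  have hP₃sub : P₃.submodule = F ∙ (P₁.rep + P₂.rep) := Projectivization.submodule_mk _ _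
  have hP₃mem : P₃ ∈ projLineThrough P₁ P₂ := by
    show P₃.submodule ≤ _
    rw [hP₃sub, Submodule.span_singleton_le_iff_mem]
    exact Submodule.add_mem_sup
      (by rw [P₁.submodule_eq]; exact Submodule.mem_span_singleton_self _)
      (by rw [P₂.submodule_eq]; exact Submodule.mem_span_singleton_self _)
  have hne31 : P₃ ≠ P₁ := by
    intro h
    apply hP12sub
    have hs := congrArg Projectivization.submodule h
    rw [hP₃sub, P₁.submodule_eq] at hs
    have hv : P₂.rep ∈ F ∙ P₁.rep := by
      have h1 : P₁.rep + P₂.rep ∈ F ∙ P₁.rep := by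
        rw [← hs]; exact Submodule.mem_span_singleton_self _
      simpa using sub_mem h1 (Submodule.mem_span_singleton_self P₁.rep)
    have hle : P₂.submodule ≤ P₁.submodule := by
      rw [P₂.submodule_eq, P₁.submodule_eq, Submodule.span_singleton_le_iff_mem]
      exact hv
    exact (Submodule.eq_of_le_of_finrank_le hle
      (by rw [P₁.finrank_submodule, P₂.finrank_submodule])).symm
  have hne32 : P₃ ≠ P₂ := by
    intro h
    apply hP12sub
    have hs := congrArg Projectivization.submodule h
    rw [hP₃sub, P₂.submodule_eq] at hs
    have hv : P₁.rep ∈ F ∙ P₂.rep := by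
      have h1 : P₁.rep + P₂.rep ∈ F ∙ P₂.rep := by
        rw [← hs]; exact Submodule.mem_span_singleton_self _
      simpa using sub_mem h1 (Submodule.mem_span_singleton_self P₂.rep)
    have hle : P₁.submodule ≤ P₂.submodule := by
      rw [P₂.submodule_eq, P₁.submodule_eq, Submodule.span_singleton_le_iff_mem]
      exact hv
    exact Submodule.eq_of_le_of_finrank_le hle
      (by rw [P₁.finrank_submodule, P₂.finrank_submodule])
  have hγne : ∀ (a b : PGPt F n × PGPt F m), a ≠ b → γ a ≠ γ b :=
    fun a b hab h => hab (hinj h)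
  -- images of the horizontal lines
  have himg : ∀ Y : PGPt F m, γ '' (g ×ˢ ({Y} : Set (PGPt F m)))
      = projLineThrough (γ (A, Y)) (γ (B, Y)) := by
    intro Y
    have h := image_lineThru hL1γ.1 (collin_horiz hg hA hB Y)
      (by simp [Prod.mk.injEq, hAB]) (hγne _ _ (by simp [Prod.mk.injEq, hAB]))
    rwa [lineThru_prod_horiz hg hA hB hAB Y] at h
  -- the transversal lines
  have htrans : ∀ Pp ∈ g, (γ (Pp, P₃)).submodule
      ≤ (γ (Pp, P₁)).submodule ⊔ (γ (Pp, P₂)).submodule := by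
    intro Pp hPp
    have h := image_lineThru hL1γ.1
      (collin_vert Pp (projLineThrough_mem hP) (mem_projLineThrough_left P₁ P₂)
        (mem_projLineThrough_right P₁ P₂))
      (by simp [Prod.mk.injEq, hP]) (hγne _ _ (by simp [Prod.mk.injEq, hP]))
    rw [lineThru_prod_vert Pp (projLineThrough_mem hP) (mem_projLineThrough_left P₁ P₂)
      (mem_projLineThrough_right P₁ P₂) hP] at h
    have hmem : γ (Pp, P₃) ∈ projLineThrough (γ (Pp, P₁)) (γ (Pp, P₂)) := by
      rw [← h]
      exact mem_image_of_mem γ (mem_prod.2 ⟨rfl, hP₃mem⟩)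
    exact hmem
  -- the spans of the images of the horizontal lines are pairwise disjoint
  have hWdisj : ∀ Y Y' : PGPt F m, Y ≠ Y' →
      ((γ (A, Y)).submodule ⊔ (γ (B, Y)).submodule)
        ⊓ ((γ (A, Y')).submodule ⊔ (γ (B, Y')).submodule) = ⊥ := by
    intro Y Y' hYY'
    rw [Submodule.eq_bot_iff]
    rintro w ⟨hw1, hw2⟩
    by_contra hw0
    have hz1 : Projectivization.mk F w hw0 ∈ γ '' (g ×ˢ ({Y} : Set (PGPt F m))) := by
      rw [himg Y]
      show (Projectivization.mk F w hw0).submodule ≤ _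
      rw [Projectivization.submodule_mk, Submodule.span_singleton_le_iff_mem]
      exact hw1
    have hz2 : Projectivization.mk F w hw0 ∈ γ '' (g ×ˢ ({Y'} : Set (PGPt F m))) := by
      rw [himg Y']
      show (Projectivization.mk F w hw0).submodule ≤ _
      rw [Projectivization.submodule_mk, Submodule.span_singleton_le_iff_mem]
      exact hw2
    obtain ⟨a, ha, haz⟩ := hz1
    obtain ⟨b, hb, hbz⟩ := hz2
    apply hYY'
    have h1 : a.2 = Y := ha.2
    have h2 : b.2 = Y' := hb.2
    rw [← h1, ← h2, hinj (haz.trans hbz.symm)]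
  -- decompositions of γ(A,P₃) and γ(B,P₃)
  obtain ⟨p, hp, q, hq, hpq⟩ := Submodule.mem_sup.1 (rep_mem_of_le (htrans A hA))
  obtain ⟨p', hp', q', hq', hpq'⟩ := Submodule.mem_sup.1 (rep_mem_of_le (htrans B hB))
  have hzA3 : (γ (A, P₃)).submodule ≤ (γ (A, P₃)).submodule ⊔ (γ (B, P₃)).submodule :=
    le_sup_left
  have hzB3 : (γ (B, P₃)).submodule ≤ (γ (A, P₃)).submodule ⊔ (γ (B, P₃)).submodule :=
    le_sup_right
  have hp0 : p ≠ 0 := by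
    intro h0
    have hm : (γ (A, P₃)).rep ∈ ((γ (A, P₂)).submodule ⊔ (γ (B, P₂)).submodule)
        ⊓ ((γ (A, P₃)).submodule ⊔ (γ (B, P₃)).submodule) :=
      ⟨by rw [← hpq, h0, zero_add]; exact Submodule.mem_sup_left hq, rep_mem_of_le hzA3⟩
    rw [hWdisj P₂ P₃ (Ne.symm hne32)] at hm
    exact (γ (A, P₃)).rep_nonzero (by simpa using hm)
  have hq0 : q ≠ 0 := by
    intro h0
    have hm : (γ (A, P₃)).rep ∈ ((γ (A, P₁)).submodule ⊔ (γ (B, P₁)).submodule)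
        ⊓ ((γ (A, P₃)).submodule ⊔ (γ (B, P₃)).submodule) :=
      ⟨by rw [← hpq, h0, add_zero]; exact Submodule.mem_sup_left hp, rep_mem_of_le hzA3⟩
    rw [hWdisj P₁ P₃ (Ne.symm hne31)] at hm
    exact (γ (A, P₃)).rep_nonzero (by simpa using hm)
  have hp'0 : p' ≠ 0 := by
    intro h0
    have hm : (γ (B, P₃)).rep ∈ ((γ (A, P₂)).submodule ⊔ (γ (B, P₂)).submodule)
        ⊓ ((γ (A, P₃)).submodule ⊔ (γ (B, P₃)).submodule) :=
      ⟨by rw [← hpq', h0, zero_add]; exact Submodule.mem_sup_right hq', rep_mem_of_le hzB3⟩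
    rw [hWdisj P₂ P₃ (Ne.symm hne32)] at hm
    exact (γ (B, P₃)).rep_nonzero (by simpa using hm)
  have hq'0 : q' ≠ 0 := by
    intro h0
    have hm : (γ (B, P₃)).rep ∈ ((γ (A, P₁)).submodule ⊔ (γ (B, P₁)).submodule)
        ⊓ ((γ (A, P₃)).submodule ⊔ (γ (B, P₃)).submodule) :=
      ⟨by rw [← hpq', h0, add_zero]; exact Submodule.mem_sup_right hp', rep_mem_of_le hzB3⟩
    rw [hWdisj P₁ P₃ (Ne.symm hne31)] at hm
    exact (γ (B, P₃)).rep_nonzero (by simpa using hm)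
  have hpspan : (F ∙ p) = (γ (A, P₁)).submodule :=
    span_eq_of_rank_one (γ (A, P₁)).finrank_submodule hp hp0
  have hqspan : (F ∙ q) = (γ (A, P₂)).submodule :=
    span_eq_of_rank_one (γ (A, P₂)).finrank_submodule hq hq0
  have hp'span : (F ∙ p') = (γ (B, P₁)).submodule :=
    span_eq_of_rank_one (γ (B, P₁)).finrank_submodule hp' hp'0
  have hq'span : (F ∙ q') = (γ (B, P₂)).submodule :=
    span_eq_of_rank_one (γ (B, P₂)).finrank_submodule hq' hq'0
  have hxAB : γ (A, P₁) ≠ γ (B, P₁) := hγne _ _ (by simp [Prod.mk.injEq, hAB])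
  have hspanne : (F ∙ p) ≠ (F ∙ p') := by
    rw [hpspan, hp'span]
    exact fun h => hxAB (Projectivization.submodule_injective h)
  have hli : LinearIndependent F ![p, p'] := by
    rw [linearIndependent_fin2]
    refine ⟨by simpa using hp'0, fun a ha => ?_⟩
    simp only [Matrix.cons_val_one, Matrix.head_cons, Matrix.cons_val_zero] at ha
    apply hspanne
    have ha0 : a ≠ 0 := fun h => hp0 (by rw [← ha, h, zero_smul])
    rw [← ha, Submodule.span_singleton_smul_eq (isUnit_iff_ne_zero.2 ha0)]
  obtain ⟨T, hTp, hTp'⟩ := exists_pair_linearMap hli q q'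
  refine ⟨T, ?_, ?_⟩
  · have e1 : spanOf (γ '' (g ×ˢ ({P₁} : Set (PGPt F m))))
        = (γ (A, P₁)).submodule ⊔ (γ (B, P₁)).submodule := by
      rw [himg P₁, spanOf_projLineThrough]
    have e2 : spanOf (γ '' (g ×ˢ ({P₂} : Set (PGPt F m))))
        = (γ (A, P₂)).submodule ⊔ (γ (B, P₂)).submodule := by
      rw [himg P₂, spanOf_projLineThrough]
    rw [e1, e2, ← hpspan, ← hp'span, ← hqspan, ← hq'span, Submodule.map_sup,
      Submodule.map_span, Submodule.map_span, image_singleton, image_singleton, hTp, hTp']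
  · intro Pp hPp
    have hxle : (γ (Pp, P₁)).submodule ≤ (γ (A, P₁)).submodule ⊔ (γ (B, P₁)).submodule := by
      have hm : γ (Pp, P₁) ∈ projLineThrough (γ (A, P₁)) (γ (B, P₁)) := by
        rw [← himg P₁]; exact mem_image_of_mem γ (mem_prod.2 ⟨hPp, rfl⟩)
      exact hm
    have hyle : (γ (Pp, P₂)).submodule ≤ (γ (A, P₂)).submodule ⊔ (γ (B, P₂)).submodule := by
      have hm : γ (Pp, P₂) ∈ projLineThrough (γ (A, P₂)) (γ (B, P₂)) := by
        rw [← himg P₂]; exact mem_image_of_mem γ (mem_prod.2 ⟨hPp, rfl⟩)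
      exact hm
    have hzle : (γ (Pp, P₃)).submodule ≤ (γ (A, P₃)).submodule ⊔ (γ (B, P₃)).submodule := by
      have hm : γ (Pp, P₃) ∈ projLineThrough (γ (A, P₃)) (γ (B, P₃)) := by
        rw [← himg P₃]; exact mem_image_of_mem γ (mem_prod.2 ⟨hPp, rfl⟩)
      exact hm
    have hrep3 : (γ (Pp, P₃)).rep ∈ (F ∙ (γ (A, P₃)).rep) ⊔ (F ∙ (γ (B, P₃)).rep) := by
      rw [← (γ (A, P₃)).submodule_eq, ← (γ (B, P₃)).submodule_eq]
      exact rep_mem_of_le hzle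
    obtain ⟨w1, hw1, w2, hw2, hsum⟩ := Submodule.mem_sup.1 hrep3
    obtain ⟨c, rfl⟩ := Submodule.mem_span_singleton.1 hw1
    obtain ⟨d, rfl⟩ := Submodule.mem_span_singleton.1 hw2
    obtain ⟨r, hr, s, hs, hrs⟩ := Submodule.mem_sup.1 (rep_mem_of_le (htrans Pp hPp))
    have heq2 : r + s = (c • p + d • p') + (c • q + d • q') := by
      rw [hrs, ← hsum, ← hpq, ← hpq']
      module
    have hcpW1 : c • p + d • p' ∈ (γ (A, P₁)).submodule ⊔ (γ (B, P₁)).submodule :=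
      add_mem (Submodule.smul_mem _ _ (Submodule.mem_sup_left hp))
        (Submodule.smul_mem _ _ (Submodule.mem_sup_right hp'))
    have hcqW2 : c • q + d • q' ∈ (γ (A, P₂)).submodule ⊔ (γ (B, P₂)).submodule :=
      add_mem (Submodule.smul_mem _ _ (Submodule.mem_sup_left hq))
        (Submodule.smul_mem _ _ (Submodule.mem_sup_right hq'))
    obtain ⟨hreq, hseq⟩ := decomp_eq (hWdisj P₁ P₂ hP) (hxle hr) hcpW1 (hyle hs) hcqW2 heq2
    have hr0 : r ≠ 0 := by
      intro h0
      have hm : (γ (Pp, P₃)).rep ∈ ((γ (A, P₂)).submodule ⊔ (γ (B, P₂)).submodule)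
          ⊓ ((γ (A, P₃)).submodule ⊔ (γ (B, P₃)).submodule) :=
        ⟨by rw [← hrs, h0, zero_add]; exact hyle hs, rep_mem_of_le hzle⟩
      rw [hWdisj P₂ P₃ (Ne.symm hne32)] at hm
      exact (γ (Pp, P₃)).rep_nonzero (by simpa using hm)
    have hs0 : s ≠ 0 := by
      intro h0
      have hm : (γ (Pp, P₃)).rep ∈ ((γ (A, P₁)).submodule ⊔ (γ (B, P₁)).submodule)
          ⊓ ((γ (A, P₃)).submodule ⊔ (γ (B, P₃)).submodule) :=
        ⟨by rw [← hrs, h0, add_zero]; exact hxle hr, rep_mem_of_le hzle⟩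
      rw [hWdisj P₁ P₃ (Ne.symm hne31)] at hm
      exact (γ (Pp, P₃)).rep_nonzero (by simpa using hm)
    have hrspan : (F ∙ r) = (γ (Pp, P₁)).submodule :=
      span_eq_of_rank_one (γ (Pp, P₁)).finrank_submodule hr hr0
    have hsspan : (F ∙ s) = (γ (Pp, P₂)).submodule :=
      span_eq_of_rank_one (γ (Pp, P₂)).finrank_submodule hs hs0
    have hTr : T r = s := by
      rw [hreq, map_add, map_smul, map_smul, hTp, hTp', hseq]
    rw [← hrspan, ← hsspan, Submodule.map_span, image_singleton, hTr]
end
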